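/- arXiv:2504.17887 — 6 statements merged into one kernel-verified Lean document; each statement's English description precedes it below -/
import Mathlib

section
/- For every tree T on n vertices there exists a vertex ranking, i.e., a labeling l : V(T) → {1, 2, …, ⌈log₂(n+1)⌉} such that for every pair of distinct vertices u, v with l(u) = l(v), the path between u and v in T contains a vertex z with l(z) > l(u). -/
open SimpleGraph

/-- A rooted decision tree: a query vertex together with a list of subtrees. -/
inductive DT (V : Type) : Type
  | node : V → List (DT V) → DT V

namespace DT

variable {V : Type} [DecidableEq V]

/-- The set of vertices (queries) appearing in a decision tree. -/
def verts : DT V → Finset V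
  | .node q ch => insert q ((ch.attach.map fun d => verts d.1).foldr (· ∪ ·) ∅)
decreasing_by simp only [DT.node.sizeOf_spec]; have := List.sizeOf_lt_of_mem d.2; omega

/-- The depth of a decision tree: the maximum number of queries on a
root-to-leaf path. -/
def depth : DT V → ℕ
  | .node _ ch => 1 + ((ch.attach.map fun d => depth d.1).foldr max 0)
decreasing_by simp only [DT.node.sizeOf_spec]; have := List.sizeOf_lt_of_mem d.2; omega

/-- Total cost of the queries on the path from the root to target `x`. -/
def costTo (c : V → ℝ) : DT V → V → ℝ
  | .node q ch, x =>
      c q + if x = q then 0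
        else ((ch.attach.map fun d => if x ∈ verts d.1 then costTo c d.1 x else 0).sum)
decreasing_by simp only [DT.node.sizeOf_spec]; have := List.sizeOf_lt_of_mem d.2; omega

/-- `u` is a (weak) ancestor of `x` in the decision tree: `x` lies in the
subtree rooted at the node querying `u`. -/
def Ancestor : DT V → V → V → Prop
  | .node q ch, u, x =>
      (u = q ∧ x ∈ verts (DT.node q ch)) ∨ ∃ d ∈ ch.attach, Ancestor d.1 u x
decreasing_by simp only [DT.node.sizeOf_spec]; have := List.sizeOf_lt_of_mem d.2; omega

/-- Validity of a decision tree with respect to a graph `G` and a candidate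
set `S`: the root query belongs to `S`, and the children correspond exactly to
the distinct connected components of the induced graph on `S` minus the query. -/
def IsValidOn (G : SimpleGraph V) : DT V → Finset V → Prop
  | .node q ch, S =>
      q ∈ S ∧
      (∀ d ∈ ch, (verts d) ⊆ S.erase q ∧ (verts d).Nonempty ∧
        ((G.induce (verts d : Set V)).Connected) ∧
        (∀ u ∈ verts d, ∀ v ∈ S.erase q, v ∉ verts d → ¬ G.Adj u v)) ∧
      (∀ v ∈ S.erase q, ∃ d ∈ ch, v ∈ verts d) ∧
      (∀ d ∈ ch, ∀ d' ∈ ch, d ≠ d' → Disjoint (verts d) (verts d')) ∧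
      (∀ d ∈ ch.attach, IsValidOn G d.1 (verts d.1))
termination_by D _ => sizeOf D
decreasing_by simp only [DT.node.sizeOf_spec]; have := List.sizeOf_lt_of_mem d.2; omega

/-- `D` is a (complete) decision tree for the tree `G` on a finite vertex set. -/
def IsDecisionTree [Fintype V] (G : SimpleGraph V) (D : DT V) : Prop :=
  IsValidOn G D Finset.univ

/-- A partial decision tree: a prefix of a decision tree (same root, each
child is a prefix of a corresponding child of the full tree). -/
def IsPrefixOf : DT V → DT V → Prop
  | .node q' ch', .node q ch =>
      q' = q ∧ ∀ d' ∈ ch'.attach, ∃ d ∈ ch, IsPrefixOf d'.1 d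
termination_by D _ => sizeOf D
decreasing_by simp only [DT.node.sizeOf_spec]; have := List.sizeOf_lt_of_mem d'.2; omega

/-- Worst-case total query cost of a decision tree. -/
noncomputable def COST (c : V → ℝ) (D : DT V) : ℝ :=
  sSup { r | ∃ x ∈ verts D, costTo c D x = r }

/-- Optimal worst-case cost of searching in the tree `G` with query costs `c`. -/
noncomputable def OPT [Fintype V] (G : SimpleGraph V) (c : V → ℝ) : ℝ :=
  sInf { r | ∃ D : DT V, IsDecisionTree G D ∧ COST c D = r }

end DT


namespace VRank

variable {V : Type} {G : SimpleGraph V}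

/-- Reachability within a finite vertex subset `S`. -/
def ReachIn (G : SimpleGraph V) (S : Finset V) (u v : V) : Prop :=
  ∃ p : G.Walk u v, ∀ x ∈ p.support, x ∈ S

lemma ReachIn.mem_left {S : Finset V} {u v : V} (h : ReachIn G S u v) : u ∈ S := by
  obtain ⟨p, hp⟩ := h; exact hp u p.start_mem_support

lemma ReachIn.mem_right {S : Finset V} {u v : V} (h : ReachIn G S u v) : v ∈ S := by
  obtain ⟨p, hp⟩ := h; exact hp v p.end_mem_support

lemma ReachIn.refl {S : Finset V} {u : V} (h : u ∈ S) : ReachIn G S u u :=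
  ⟨Walk.nil, by simpa using h⟩

lemma ReachIn.symm {S : Finset V} {u v : V} (h : ReachIn G S u v) : ReachIn G S v u := by
  obtain ⟨p, hp⟩ := h
  exact ⟨p.reverse, fun x hx => hp x (by simpa [Walk.support_reverse] using hx)⟩

lemma ReachIn.trans {S : Finset V} {u v w : V} (h : ReachIn G S u v) (h' : ReachIn G S v w) :
    ReachIn G S u w := by
  obtain ⟨p, hp⟩ := h
  obtain ⟨q, hq⟩ := h'
  refine ⟨p.append q, fun x hx => ?_⟩
  rw [Walk.mem_support_append_iff] at hx
  exact hx.elim (hp x) (hq x)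

open scoped Classical in
/-- The connected component of `v` inside `S`. -/
noncomputable def comp (G : SimpleGraph V) (S : Finset V) (v : V) : Finset V :=
  S.filter (fun w => ReachIn G S v w)

lemma mem_comp {S : Finset V} {v w : V} :
    w ∈ comp G S v ↔ w ∈ S ∧ ReachIn G S v w := by
  classical simp [comp]

lemma comp_subset {S : Finset V} {v : V} : comp G S v ⊆ S := fun _ h => (mem_comp.mp h).1

lemma comp_eq_of_mem {S : Finset V} {v w : V} (h : w ∈ comp G S v) :
    comp G S w = comp G S v := by
  obtain ⟨hwS, hr⟩ := mem_comp.mp h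
  ext x
  simp only [mem_comp]
  exact ⟨fun ⟨hx, h1⟩ => ⟨hx, hr.trans h1⟩, fun ⟨hx, h1⟩ => ⟨hx, hr.symm.trans h1⟩⟩

lemma walk_mem_comp [DecidableEq V] {S : Finset V} {u w : V} (p : G.Walk u w)
    (hp : ∀ x ∈ p.support, x ∈ S) {x : V} (hx : x ∈ p.support) : x ∈ comp G S u :=
  mem_comp.mpr ⟨hp x hx, ⟨p.takeUntil x hx, fun y hy => hp y (p.support_takeUntil_subset hx hy)⟩⟩

lemma exists_neighbor_reach [DecidableEq V] {S : Finset V} {c v : V} (hvc : v ≠ c)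
    (h : ReachIn G S c v) : ∃ c', G.Adj c c' ∧ ReachIn G (S.erase c) c' v := by
  obtain ⟨p0, hp0⟩ := h
  have hps : ∀ x ∈ (p0.toPath : G.Walk c v).support, x ∈ S :=
    fun x hx => hp0 x (p0.support_toPath_subset hx)
  have hp : (p0.toPath : G.Walk c v).IsPath := p0.toPath.2
  set q : G.Walk c v := (p0.toPath : G.Walk c v) with hq
  clear_value q
  cases q with
  | nil => exact absurd rfl hvc.symm
  | cons hadj r =>
    rw [Walk.cons_isPath_iff] at hp
    refine ⟨_, hadj, r, fun x hx => Finset.mem_erase.mpr ⟨?_, hps x (by simp [hx])⟩⟩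
    exact fun hxc => hp.2 (hxc ▸ hx)


lemma centroid [DecidableEq V] (hac : G.IsAcyclic) (S : Finset V) (hS : S.Nonempty)
    (hconn : ∀ u ∈ S, ∀ v ∈ S, ReachIn G S u v) :
    ∃ c ∈ S, ∀ v ∈ S.erase c, 2 * (comp G (S.erase c) v).card ≤ S.card := by
  obtain ⟨c, hcS, hmin⟩ :=
    S.exists_min_image (fun c => (S.erase c).sup fun v => (comp G (S.erase c) v).card) hS
  refine ⟨c, hcS, ?_⟩
  by_contra hbad
  push_neg at hbad
  obtain ⟨v, hvT, hbig⟩ := hbad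
  set T := S.erase c with hT
  set C := comp G T v with hC
  have hvS : v ∈ S := Finset.mem_of_mem_erase hvT
  have hvc : v ≠ c := Finset.ne_of_mem_erase hvT
  have hvC : v ∈ C := mem_comp.mpr ⟨hvT, ReachIn.refl hvT⟩
  -- find a neighbor c' of c inside C
  obtain ⟨c', hcc', hrc'⟩ := exists_neighbor_reach hvc (hconn c hcS v hvS)
  have hc'T : c' ∈ T := hrc'.mem_left
  have hc'C : c' ∈ C := mem_comp.mpr ⟨hc'T, hrc'.symm⟩
  have hc'S : c' ∈ S := Finset.mem_of_mem_erase hc'T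
  have hc'c : c' ≠ c := Finset.ne_of_mem_erase hc'T
  have hCsub : C ⊆ S := comp_subset.trans (Finset.erase_subset _ _)
  -- key claim: every component after removing c' is smaller than C
  have key : ∀ w ∈ S.erase c', (comp G (S.erase c') w).card < C.card := by
    intro w hw
    set D := comp G (S.erase c') w with hD
    have hwS : w ∈ S := Finset.mem_of_mem_erase hw
    have hwc' : w ≠ c' := Finset.ne_of_mem_erase hw
    have hwD : w ∈ D := mem_comp.mpr ⟨hw, ReachIn.refl hw⟩
    by_cases hcD : c ∈ D
    · -- D is disjoint from C
      have hdisj : ∀ x ∈ D, x ∉ C := by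
        intro x hxD hxC
        have hxc' : x ≠ c' := Finset.ne_of_mem_erase (comp_subset hxD)
        -- walk from x to c avoiding c'
        obtain ⟨p1, hp1⟩ :=
          ((mem_comp.mp hxD).2.symm.trans (mem_comp.mp hcD).2 : ReachIn G (S.erase c') x c)
        -- walk from x to c' avoiding c
        obtain ⟨p2, hp2⟩ :=
          ((mem_comp.mp hxC).2.symm.trans (mem_comp.mp hc'C).2 : ReachIn G T x c')
        -- two distinct paths from c to x
        let Q1 : G.Path c x := p1.reverse.toPath
        have hQ1 : ∀ y ∈ (Q1 : G.Walk c x).support, y ∈ S.erase c' := fun y hy =>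
          hp1 y (by simpa [Walk.support_reverse] using p1.reverse.support_toPath_subset hy)
        let Q2 : G.Path c' x := p2.reverse.toPath
        have hQ2 : ∀ y ∈ (Q2 : G.Walk c' x).support, y ∈ T := fun y hy =>
          hp2 y (by simpa [Walk.support_reverse] using p2.reverse.support_toPath_subset hy)
        have hcQ2 : c ∉ (Q2 : G.Walk c' x).support := fun hy =>
          Finset.ne_of_mem_erase (hQ2 c hy) rfl
        let P2 : G.Path c x := ⟨Walk.cons hcc' (Q2 : G.Walk c' x), Q2.2.cons hcQ2⟩
        have := isAcyclic_iff_path_unique.mp hac Q1 P2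
        have hc'P2 : c' ∈ (P2 : G.Walk c x).support := by
          simp [P2, Walk.support_cons]
        rw [this] at hQ1
        exact Finset.ne_of_mem_erase (hQ1 c' hc'P2) rfl
      have hdisj' : Disjoint D C := Finset.disjoint_left.mpr hdisj
      have hDS : D ⊆ S := comp_subset.trans (Finset.erase_subset _ _)
      have hcard : D.card + C.card ≤ S.card := by
        rw [← Finset.card_union_of_disjoint hdisj']
        exact Finset.card_le_card (Finset.union_subset hDS hCsub)
      omega
    · -- c ∉ D: then w ∈ C and D ⊆ C.erase c'
      have hwC : w ∈ C := by
        by_contra hwC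
        have hwc : w ≠ c := by
          rintro rfl; exact hcD hwD
        obtain ⟨c'', hadj2, hr⟩ := exists_neighbor_reach hwc (hconn c hcS w hwS)
        obtain ⟨r, hrs⟩ := hr
        by_cases hc'r : c' ∈ r.support
        · -- then w ∈ C
          have h1 : c' ∈ comp G T c'' := walk_mem_comp r hrs hc'r
          have h2 : w ∈ comp G T c'' := walk_mem_comp r hrs r.end_mem_support
          rw [← comp_eq_of_mem h1, comp_eq_of_mem hc'C] at h2
          exact hwC h2
        · -- then c ∈ D
          refine hcD (mem_comp.mpr ⟨Finset.mem_erase.mpr ⟨(Ne.symm hc'c), hcS⟩, ?_⟩)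
          refine ReachIn.symm ⟨Walk.cons hadj2 r, ?_⟩
          intro y hy
          rw [Walk.support_cons, List.mem_cons] at hy
          rcases hy with rfl | hy
          · exact Finset.mem_erase.mpr ⟨Ne.symm hc'c, hcS⟩
          · exact Finset.mem_erase.mpr ⟨fun h => hc'r (h ▸ hy),
              Finset.mem_of_mem_erase (hrs y hy)⟩
      have hDsub : D ⊆ C.erase c' := by
        intro x hxD
        obtain ⟨hxT', hrx⟩ := mem_comp.mp hxD
        obtain ⟨r, hrs⟩ := hrx
        have hcr : c ∉ r.support := fun hcr =>
          hcD (walk_mem_comp r hrs hcr)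
        have hrT : ∀ y ∈ r.support, y ∈ T := fun y hy =>
          Finset.mem_erase.mpr ⟨fun h => hcr (h ▸ hy), Finset.mem_of_mem_erase (hrs y hy)⟩
        have : x ∈ comp G T w := mem_comp.mpr ⟨hrT x r.end_mem_support, ⟨r, hrT⟩⟩
        rw [comp_eq_of_mem hwC] at this
        exact Finset.mem_erase.mpr ⟨Finset.ne_of_mem_erase hxT', this⟩
      calc D.card ≤ (C.erase c').card := Finset.card_le_card hDsub
        _ < C.card := Finset.card_lt_card (Finset.erase_ssubset hc'C)
  -- contradiction with minimality
  have h1 : C.card ≤ T.sup fun v => (comp G T v).card :=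
    Finset.le_sup (f := fun v => (comp G T v).card) hvT
  have h2 := hmin c' hc'S
  have h3 : ((S.erase c').sup fun v => (comp G (S.erase c') v).card) < C.card :=
    (Finset.sup_lt_iff (Finset.card_pos.mpr ⟨v, hvC⟩)).mpr key
  omega


lemma clog_step {m n : ℕ} (hn : 1 ≤ n) (h : 2 * m ≤ n) :
    Nat.clog 2 (m + 1) + 1 ≤ Nat.clog 2 (n + 1) := by
  rw [Nat.clog_of_two_le (by norm_num) (by omega : 2 ≤ n + 1)]
  have hle : m + 1 ≤ (n + 1 + 2 - 1) / 2 := by omega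
  exact Nat.succ_le_succ (Nat.clog_mono_right _ hle)

lemma rank [DecidableEq V] (hac : G.IsAcyclic) :
    ∀ n : ℕ, ∀ S : Finset V, S.card = n →
    (∀ u ∈ S, ∀ v ∈ S, ReachIn G S u v) →
    ∃ l : V → ℕ, (∀ v ∈ S, 1 ≤ l v ∧ l v ≤ Nat.clog 2 (S.card + 1)) ∧
      (∀ u ∈ S, ∀ v ∈ S, u ≠ v → l u = l v →
        ∀ p : G.Walk u v, (∀ x ∈ p.support, x ∈ S) → ∃ z ∈ p.support, l u < l z) := by
  intro n
  induction n using Nat.strong_induction_on with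
  | _ n IH =>
  intro S hcard hconn
  rcases S.eq_empty_or_nonempty with rfl | hS
  · exact ⟨fun _ => 1, fun v hv => by simp at hv,
      fun u hu => by simp at hu⟩
  obtain ⟨c, hcS, hcent⟩ := centroid hac S hS hconn
  set T := S.erase c with hT
  set K := Nat.clog 2 (S.card + 1) with hK
  have hScard : 1 ≤ S.card := Finset.card_pos.mpr hS
  have hK1 : 1 ≤ K := Nat.clog_pos (by norm_num) (by omega)
  -- choice function for components
  have hex : ∀ A : Finset V,
      ∃ l : V → ℕ, (A.card < n ∧ (∀ u ∈ A, ∀ v ∈ A, ReachIn G A u v)) →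
        ((∀ v ∈ A, 1 ≤ l v ∧ l v ≤ Nat.clog 2 (A.card + 1)) ∧
         (∀ u ∈ A, ∀ v ∈ A, u ≠ v → l u = l v →
          ∀ p : G.Walk u v, (∀ x ∈ p.support, x ∈ A) → ∃ z ∈ p.support, l u < l z)) := by
    intro A
    by_cases hA : A.card < n ∧ (∀ u ∈ A, ∀ v ∈ A, ReachIn G A u v)
    · obtain ⟨l, hl⟩ := IH A.card hA.1 A rfl hA.2
      exact ⟨l, fun _ => hl⟩
    · exact ⟨fun _ => 1, fun h => absurd h hA⟩
  choose F hF using hex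
  -- properties of components of T
  have hvalid : ∀ x ∈ T, (comp G T x).card < n ∧
      (∀ u ∈ comp G T x, ∀ v ∈ comp G T x, ReachIn G (comp G T x) u v) := by
    intro x hx
    constructor
    · calc (comp G T x).card ≤ T.card := Finset.card_le_card comp_subset
        _ < S.card := Finset.card_erase_lt_of_mem hcS
        _ = n := hcard
    · intro u hu v hv
      obtain ⟨p, hp⟩ := ((mem_comp.mp hu).2.symm.trans (mem_comp.mp hv).2 : ReachIn G T u v)
      refine ⟨p, fun y hy => ?_⟩
      have := walk_mem_comp p hp hy
      rwa [comp_eq_of_mem hu] at this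
  have hbound : ∀ x ∈ T, Nat.clog 2 ((comp G T x).card + 1) + 1 ≤ K :=
    fun x hx => clog_step hScard (hcent x hx)
  -- the labeling
  classical
  set l : V → ℕ := fun x => if x = c then K else if x ∈ T then F (comp G T x) x else 1 with hl
  have hlc : l c = K := by simp [hl]
  have hlT : ∀ x ∈ T, l x = F (comp G T x) x := by
    intro x hx
    have : x ≠ c := Finset.ne_of_mem_erase hx
    simp [hl, this, hx]
  have hxself : ∀ x ∈ T, x ∈ comp G T x := fun x hx => mem_comp.mpr ⟨hx, ReachIn.refl hx⟩
  have hTbounds : ∀ x ∈ T, 1 ≤ l x ∧ l x + 1 ≤ K := by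
    intro x hx
    have h1 := (hF (comp G T x) (hvalid x hx)).1 x (hxself x hx)
    rw [hlT x hx]
    exact ⟨h1.1, le_trans (Nat.add_le_add_right h1.2 1) (hbound x hx)⟩
  have hmemT : ∀ x ∈ S, x ≠ c → x ∈ T := fun x hx hxc => Finset.mem_erase.mpr ⟨hxc, hx⟩
  refine ⟨l, ?_, ?_⟩
  · intro x hx
    by_cases hxc : x = c
    · subst hxc; rw [hlc]; exact ⟨hK1, le_refl _⟩
    · have := hTbounds x (hmemT x hx hxc)
      omega
  · intro u hu v hv huv heq p hps
    by_cases huc : u = c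
    · subst huc
      have hvT := hmemT v hv (Ne.symm huv)
      have := hTbounds v hvT
      rw [hlc] at heq
      omega
    by_cases hvc : v = c
    · subst hvc
      have huT := hmemT u hu huv
      have := hTbounds u huT
      rw [hlc] at heq
      omega
    have huT := hmemT u hu huc
    have hvT := hmemT v hv hvc
    by_cases hcp : c ∈ p.support
    · refine ⟨c, hcp, ?_⟩
      rw [hlc]
      have := hTbounds u huT
      omega
    · -- walk stays inside T, hence inside comp G T u
      have hpsT : ∀ x ∈ p.support, x ∈ T :=
        fun x hx => Finset.mem_erase.mpr ⟨fun h => hcp (h ▸ hx), hps x hx⟩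
      set A := comp G T u with hA
      have hpsA : ∀ x ∈ p.support, x ∈ A := fun x hx => walk_mem_comp p hpsT hx
      have huA : u ∈ A := hxself u huT
      have hvA : v ∈ A := hpsA v p.end_mem_support
      have heq' : F A u = F A v := by
        rw [← hlT u huT, heq, hlT v hvT, (comp_eq_of_mem hvA : comp G T v = A)]
      obtain ⟨z, hz, hzlt⟩ := (hF A (hvalid u huT)).2 u huA v hvA huv heq' p hpsA
      refine ⟨z, hz, ?_⟩
      have hzT : z ∈ T := comp_subset (hpsA z hz)
      rw [hlT u huT, hlT z hzT, ← hA]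
      have : comp G T z = A := comp_eq_of_mem (hpsA z hz)
      rw [this]
      exact hzlt

end VRank


/-- Every tree on `n` vertices admits a vertex ranking using
labels `{1, …, ⌈log₂ (n+1)⌉}`: any two distinct equal-labelled vertices are
separated on the path between them by a vertex with a strictly larger label. -/
theorem stmt1 {V : Type} [Fintype V] (G : SimpleGraph V) (hG : G.IsTree)
    (n : ℕ) (hn : Fintype.card V = n) :
    ∃ l : V → ℕ, (∀ v, 1 ≤ l v ∧ l v ≤ Nat.clog 2 (n + 1)) ∧
      ∀ u v : V, u ≠ v → l u = l v →
        ∀ p : G.Walk u v, p.IsPath → ∃ z ∈ p.support, l u < l z := by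
  classical
  have hconn : ∀ u ∈ (Finset.univ : Finset V), ∀ v ∈ (Finset.univ : Finset V),
      VRank.ReachIn G Finset.univ u v := by
    intro u _ v _
    exact (hG.1.preconnected u v).elim fun p => ⟨p, fun x _ => Finset.mem_univ x⟩
  obtain ⟨l, hbd, hsep⟩ :=
    VRank.rank (G := G) hG.2 (Fintype.card V) Finset.univ (by simp) hconn
  have hcard : (Finset.univ : Finset V).card = n := by simp [hn]
  refine ⟨l, fun v => ?_, fun u v hne heq p _ => ?_⟩
  · have := hbd v (Finset.mem_univ v)
    rwa [hcard] at this
  · exact hsep u (Finset.mem_univ u) v (Finset.mem_univ v) hne heq p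
      (fun x _ => Finset.mem_univ x)
end

section
/- If a tree T on n vertices has uniform query costs (c(v) = 1 for all v), then there exists a decision tree for T whose depth, i.e., the worst-case number of queries, is at most ⌊log₂ n⌋ + 1. -/
open SimpleGraph

section RIn
open SimpleGraph
set_option linter.unusedSectionVars false
variable {V : Type} [DecidableEq V] {G : SimpleGraph V}

/-- Reachability within a finset: a walk whose support stays in `A`. -/
def RIn (G : SimpleGraph V) (A : Finset V) (u v : V) : Prop :=
  ∃ p : G.Walk u v, ∀ x ∈ p.support, x ∈ A

lemma RIn.refl {A : Finset V} {v : V} (hv : v ∈ A) : RIn G A v v :=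
  ⟨.nil, by simpa using hv⟩

lemma RIn.symm {A : Finset V} {u v : V} (h : RIn G A u v) : RIn G A v u := by
  obtain ⟨p, hp⟩ := h
  exact ⟨p.reverse, by simpa [SimpleGraph.Walk.support_reverse] using hp⟩

lemma RIn.trans {A : Finset V} {u v w : V} (h : RIn G A u v) (h' : RIn G A v w) :
    RIn G A u w := by
  obtain ⟨p, hp⟩ := h; obtain ⟨p', hp'⟩ := h'
  refine ⟨p.append p', fun x hx => ?_⟩
  rw [SimpleGraph.Walk.support_append] at hx
  rcases List.mem_append.1 hx with h | h
  · exact hp x h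
  · exact hp' x (List.mem_of_mem_tail h)

lemma RIn.mem_left {A : Finset V} {u v : V} (h : RIn G A u v) : u ∈ A :=
  h.choose_spec u (SimpleGraph.Walk.start_mem_support _)

lemma RIn.mem_right {A : Finset V} {u v : V} (h : RIn G A u v) : v ∈ A :=
  h.choose_spec v (SimpleGraph.Walk.end_mem_support _)

lemma RIn.mono {A B : Finset V} {u v : V} (hAB : A ⊆ B) (h : RIn G A u v) :
    RIn G B u v := by
  obtain ⟨p, hp⟩ := h; exact ⟨p, fun x hx => hAB (hp x hx)⟩

/-- The connected component of `v` within the finset `A`. -/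
noncomputable def compF (G : SimpleGraph V) (A : Finset V) (v : V) : Finset V :=
  @Finset.filter _ (fun w => RIn G A v w) (fun _ => Classical.propDecidable _) A

lemma mem_compF {A : Finset V} {v w : V} :
    w ∈ compF G A v ↔ w ∈ A ∧ RIn G A v w :=
  @Finset.mem_filter _ _ (fun _ => Classical.propDecidable _) A w

lemma self_mem_compF {A : Finset V} {v : V} (hv : v ∈ A) : v ∈ compF G A v :=
  mem_compF.2 ⟨hv, RIn.refl hv⟩

lemma compF_subset {A : Finset V} {v : V} : compF G A v ⊆ A :=
  fun _ hx => (mem_compF.1 hx).1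

lemma compF_eq_of_mem {A : Finset V} {v w : V} (hw : w ∈ compF G A v) :
    compF G A w = compF G A v := by
  obtain ⟨hwA, hvw⟩ := mem_compF.1 hw
  ext x
  simp only [mem_compF]
  exact ⟨fun ⟨hx, h⟩ => ⟨hx, hvw.trans h⟩, fun ⟨hx, h⟩ => ⟨hx, hvw.symm.trans h⟩⟩

lemma walk_support_subset_compF {A : Finset V} {v u : V} (p : G.Walk v u)
    (hp : ∀ x ∈ p.support, x ∈ A) : ∀ x ∈ p.support, x ∈ compF G A v := by
  intro x hx
  exact mem_compF.2 ⟨hp x hx,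
    ⟨p.takeUntil x hx, fun y hy => hp y (SimpleGraph.Walk.support_takeUntil_subset _ _ hy)⟩⟩

lemma rin_compF {A : Finset V} {v u w : V} (hu : u ∈ compF G A v)
    (hw : w ∈ compF G A v) : RIn G (compF G A v) u w := by
  obtain ⟨-, ⟨p, hp⟩⟩ := mem_compF.1 hu
  obtain ⟨-, ⟨p', hp'⟩⟩ := mem_compF.1 hw
  refine ⟨p.reverse.append p', fun x hx => ?_⟩
  rw [SimpleGraph.Walk.support_append] at hx
  rcases List.mem_append.1 hx with h | h
  · rw [SimpleGraph.Walk.support_reverse] at h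
    exact walk_support_subset_compF p hp x (List.mem_reverse.1 h)
  · exact walk_support_subset_compF p' hp' x (List.mem_of_mem_tail h)

lemma not_adj_of_compF {A : Finset V} {v u x : V} (hu : u ∈ compF G A v)
    (hx : x ∈ A) (hxc : x ∉ compF G A v) : ¬ G.Adj u x := by
  intro hadj
  obtain ⟨huA, hvu⟩ := mem_compF.1 hu
  refine hxc (mem_compF.2 ⟨hx, hvu.trans ⟨.cons hadj .nil, ?_⟩⟩)
  intro y hy
  simp only [SimpleGraph.Walk.support_cons, SimpleGraph.Walk.support_nil,
    List.mem_cons, List.mem_singleton, List.not_mem_nil, or_false] at hy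
  rcases hy with h | h
  · rwa [h]
  · rwa [h]

lemma compF_disjoint {A : Finset V} {v v' : V} (h : compF G A v ≠ compF G A v') :
    Disjoint (compF G A v) (compF G A v') := by
  rw [Finset.disjoint_left]
  intro z hz hz'
  exact h ((compF_eq_of_mem hz).symm.trans (compF_eq_of_mem hz'))

lemma reachable_induce_of_walk {s : Set V} {u v : V} (p : G.Walk u v)
    (h : ∀ x ∈ p.support, x ∈ s) (hu : u ∈ s) (hv : v ∈ s) :
    (G.induce s).Reachable ⟨u, hu⟩ ⟨v, hv⟩ := by
  induction p with
  | nil => exact SimpleGraph.Reachable.refl _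
  | @cons a b c hab p ih =>
    have hb : b ∈ s := h b (by simp)
    have h' : ∀ x ∈ p.support, x ∈ s := fun x hx => h x (by simp [hx])
    exact SimpleGraph.Reachable.trans
      (SimpleGraph.Adj.reachable (by exact hab : (G.induce s).Adj ⟨a, hu⟩ ⟨b, hb⟩))
      (ih h' hb hv)

lemma induce_connected_compF {A : Finset V} {v : V} (hv : v ∈ A) :
    (G.induce ((compF G A v : Finset V) : Set V)).Connected := by
  rw [SimpleGraph.connected_iff]
  refine ⟨fun ⟨x, hx⟩ ⟨y, hy⟩ => ?_, ⟨⟨v, by simpa using self_mem_compF hv⟩⟩⟩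
  have hx' : x ∈ compF G A v := by simpa using hx
  have hy' : y ∈ compF G A v := by simpa using hy
  obtain ⟨p, hp⟩ := rin_compF hx' hy'
  exact reachable_induce_of_walk p (fun z hz => by simpa using hp z hz) hx hy

end RIn

section Centroid
open SimpleGraph
set_option linter.unusedSectionVars false
variable {V : Type} [DecidableEq V] {G : SimpleGraph V}

lemma centroid (hac : G.IsAcyclic) (S : Finset V) (hS : S.Nonempty)
    (hconn : ∀ u ∈ S, ∀ v ∈ S, RIn G S u v) :
    ∃ q ∈ S, ∀ v ∈ S.erase q, (compF G (S.erase q) v).card ≤ S.card / 2 := by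
  obtain ⟨q, hq, hmin⟩ := S.exists_min_image
    (fun r => (S.erase r).sup fun v => (compF G (S.erase r) v).card) hS
  refine ⟨q, hq, ?_⟩
  by_contra hbad
  push_neg at hbad
  obtain ⟨v, hv, hvc⟩ := hbad
  set A := S.erase q with hA
  set C := compF G A v with hC
  have hvS : v ∈ S := Finset.mem_of_mem_erase hv
  have hvC : v ∈ C := self_mem_compF hv
  have hCA : C ⊆ A := compF_subset
  have hCS : C ⊆ S := fun x hx => Finset.mem_of_mem_erase (hCA hx)
  have hqA : q ∉ A := Finset.notMem_erase q S
  have hqC : q ∉ C := fun h => hqA (hCA h)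
  have hfq : C.card ≤ (S.erase q).sup fun v => (compF G (S.erase q) v).card :=
    Finset.le_sup (f := fun v => (compF G (S.erase q) v).card) hv
  -- existence of a neighbor q' of q inside C
  obtain ⟨q', hq'C, hq'adj⟩ : ∃ q' ∈ C, G.Adj q' q := by
    obtain ⟨p, hp⟩ := hconn v hvS q hq
    obtain ⟨d, hd, hd1, hd2⟩ := p.exists_boundary_dart (↑C : Set V)
      (by simpa using hvC) (by simpa using hqC)
    have hyS : d.toProd.2 ∈ S := hp _ (Walk.dart_snd_mem_support_of_mem_darts p hd)
    have hd1' : d.toProd.1 ∈ C := by simpa using hd1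
    have hd2' : d.toProd.2 ∉ C := by simpa using hd2
    have hyq : d.toProd.2 = q := by
      by_contra hne
      exact not_adj_of_compF hd1' (Finset.mem_erase.2 ⟨hne, hyS⟩) hd2' d.adj
    exact ⟨d.toProd.1, hd1', hyq ▸ d.adj⟩
  have hq'S : q' ∈ S := hCS hq'C
  have hq'A : q' ∈ A := hCA hq'C
  have hqq' : q ≠ q' := fun h => hqA (h ▸ hq'A)
  -- uniqueness of the neighbor
  have huniq : ∀ x ∈ C, G.Adj x q → x = q' := by
    intro x hxC hxq
    by_contra hne
    obtain ⟨w, hw⟩ := rin_compF hq'C hxC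
    have hbp : w.bypass.IsPath := Walk.bypass_isPath w
    have hsupp : ∀ z ∈ w.bypass.support, z ∈ C :=
      fun z hz => hw z (Walk.support_bypass_subset w hz)
    have hqnot : q ∉ w.bypass.support := fun h => hqC (hsupp q h)
    let P1 : G.Path q x := SimpleGraph.Path.singleton hxq.symm
    let P2 : G.Path q x := ⟨Walk.cons hq'adj.symm w.bypass, hbp.cons hqnot⟩
    have hPeq : P1 = P2 := isAcyclic_iff_path_unique.1 hac P1 P2
    have hs : ([q, x] : List V) = q :: w.bypass.support := by
      have := congrArg (fun p : G.Path q x => p.1.support) hPeq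
      simpa [P1, P2, SimpleGraph.Path.singleton] using this
    have h2 : w.bypass.support = q' :: w.bypass.support.tail := Walk.support_eq_cons _
    rw [h2] at hs
    simp only [List.cons.injEq] at hs
    exact hne hs.2.1
  -- the two claims about components of S.erase q'
  set A' := S.erase q' with hA'
  have hA'S : A' ⊆ S := Finset.erase_subset _ _
  have hqA' : q ∈ A' := Finset.mem_erase.2 ⟨hqq', hq⟩
  -- key1: the component of q in A' is disjoint from C
  have hdisj : ∀ u ∈ compF G A' q, u ∉ C := by
    intro u hu huC
    obtain ⟨huA', ⟨w, hw⟩⟩ := mem_compF.1 hu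
    obtain ⟨d, hd, hd1, hd2⟩ := w.reverse.exists_boundary_dart (↑C : Set V)
      (by simpa using huC) (by simpa using hqC)
    have hyA' : d.toProd.2 ∈ A' := by
      refine hw _ ?_
      have := Walk.dart_snd_mem_support_of_mem_darts w.reverse hd
      rwa [Walk.support_reverse, List.mem_reverse] at this
    have hxA' : d.toProd.1 ∈ A' := by
      refine hw _ ?_
      have := Walk.dart_fst_mem_support_of_mem_darts w.reverse hd
      rwa [Walk.support_reverse, List.mem_reverse] at this
    have hd1' : d.toProd.1 ∈ C := by simpa using hd1
    have hd2' : d.toProd.2 ∉ C := by simpa using hd2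
    have hyq : d.toProd.2 = q := by
      by_contra hne
      exact not_adj_of_compF hd1' (Finset.mem_erase.2 ⟨hne, hA'S hyA'⟩) hd2' d.adj
    have : d.toProd.1 = q' := huniq _ hd1' (hyq ▸ d.adj)
    exact (Finset.mem_erase.1 hxA').1 this
  -- key2: anything in A' outside C reaches q within A'
  have hkey2 : ∀ u ∈ A', u ∉ C → RIn G A' u q := by
    intro u huA' huC
    rcases eq_or_ne u q with rfl | hune
    · exact RIn.refl hqA'
    have huA : u ∈ A := Finset.mem_erase.2 ⟨hune, hA'S huA'⟩
    set Cu := compF G A u with hCu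
    have huCu : u ∈ Cu := self_mem_compF huA
    have hq'Cu : q' ∉ Cu := by
      intro h
      have : Cu = C := by
        rw [hCu, hC, ← compF_eq_of_mem h, compF_eq_of_mem hq'C]
      exact huC (this ▸ huCu)
    have hCuA' : Cu ⊆ A' := by
      intro z hz
      refine Finset.mem_erase.2 ⟨fun h => hq'Cu (h ▸ hz), Finset.mem_of_mem_erase (compF_subset hz)⟩
    have hqCu : q ∉ Cu := fun h => hqA (compF_subset h)
    obtain ⟨p, hp⟩ := hconn u (hA'S huA') q hq
    obtain ⟨d, hd, hd1, hd2⟩ := p.exists_boundary_dart (↑Cu : Set V)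
      (by simpa using huCu) (by simpa using hqCu)
    have hyS : d.toProd.2 ∈ S := hp _ (Walk.dart_snd_mem_support_of_mem_darts p hd)
    have hd1' : d.toProd.1 ∈ Cu := by simpa using hd1
    have hd2' : d.toProd.2 ∉ Cu := by simpa using hd2
    have hyq : d.toProd.2 = q := by
      by_contra hne
      exact not_adj_of_compF hd1' (Finset.mem_erase.2 ⟨hne, hyS⟩) hd2' d.adj
    have hadjq : G.Adj d.toProd.1 q := hyq ▸ d.adj
    have h1 : RIn G A' u d.toProd.1 := (rin_compF huCu hd1').mono hCuA'
    refine h1.trans ⟨Walk.cons hadjq Walk.nil, ?_⟩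
    intro y hy
    simp only [Walk.support_cons, Walk.support_nil, List.mem_cons,
      List.mem_singleton, List.not_mem_nil, or_false] at hy
    rcases hy with h | h
    · exact h ▸ hCuA' hd1'
    · exact h ▸ hqA'
  -- bound all components of A'
  have hCcard : S.card / 2 < C.card := hvc
  have hCne : C.Nonempty := ⟨v, hvC⟩
  have hmain : ∀ v' ∈ A', (compF G A' v').card <
      (S.erase q).sup fun v => (compF G (S.erase q) v).card := by
    intro v' hv'
    by_cases hqmem : q ∈ compF G A' v'
    · have heq : compF G A' v' = compF G A' q := (compF_eq_of_mem hqmem).symm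
      have hsub : compF G A' q ⊆ S \ C := by
        intro u hu
        exact Finset.mem_sdiff.2 ⟨hA'S (compF_subset hu), hdisj u hu⟩
      have h1 : (compF G A' v').card ≤ S.card - C.card := by
        rw [heq]
        calc (compF G A' q).card ≤ (S \ C).card := Finset.card_le_card hsub
        _ = S.card - C.card := by rw [Finset.card_sdiff_of_subset hCS]
      have h2 : C.card ≤ S.card := Finset.card_le_card hCS
      omega
    · have hsub : compF G A' v' ⊆ C.erase q' := by
        intro u hu
        have huA' : u ∈ A' := compF_subset hu
        have huC : u ∈ C := by
          by_contra huC
          exact hqmem (mem_compF.2 ⟨hqA',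
            (mem_compF.1 hu).2.trans (hkey2 u huA' huC)⟩)
        exact Finset.mem_erase.2 ⟨(Finset.mem_erase.1 huA').1, huC⟩
      have h1 : (compF G A' v').card ≤ C.card - 1 := by
        calc (compF G A' v').card ≤ (C.erase q').card := Finset.card_le_card hsub
        _ = C.card - 1 := Finset.card_erase_of_mem hq'C
      have h2 : 1 ≤ C.card := hCne.card_pos
      omega
  have hlt : ((S.erase q').sup fun v => (compF G (S.erase q') v).card) <
      (S.erase q).sup fun v => (compF G (S.erase q) v).card := by
    apply Finset.sup_lt_iff (lt_of_lt_of_le hCne.card_pos hfq) |>.2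
    exact hmain
  have hge : ((S.erase q).sup fun v => (compF G (S.erase q) v).card) ≤
      ((S.erase q').sup fun v => (compF G (S.erase q') v).card) := hmin q' hq'S
  omega

end Centroid

section Build
open SimpleGraph
set_option linter.unusedSectionVars false
variable {V : Type} [DecidableEq V] {G : SimpleGraph V}

lemma mem_foldr_union {α : Type} [DecidableEq α] (l : List (Finset α)) (x : α) :
    x ∈ l.foldr (· ∪ ·) ∅ ↔ ∃ s ∈ l, x ∈ s := by
  induction l with
  | nil => simp
  | cons a l ih => simp [ih]

lemma DT.mem_verts_node {q : V} {ch : List (DT V)} {x : V} :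
    x ∈ DT.verts (DT.node q ch) ↔ x = q ∨ ∃ d ∈ ch, x ∈ DT.verts d := by
  rw [DT.verts]
  simp [mem_foldr_union]

lemma DT.depth_node {q : V} {ch : List (DT V)} :
    DT.depth (DT.node q ch) = 1 + (ch.attach.map fun d => DT.depth d.1).foldr max 0 := by
  rw [DT.depth]

lemma foldr_max_le {l : List ℕ} {k : ℕ} (h : ∀ a ∈ l, a ≤ k) : l.foldr max 0 ≤ k := by
  induction l with
  | nil => simp
  | cons a l ih =>
    simp only [List.foldr_cons, max_le_iff]
    exact ⟨h a (by simp), ih fun a ha => h a (by simp [ha])⟩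

lemma build (hac : G.IsAcyclic) : ∀ (N : ℕ) (S : Finset V), S.card ≤ N → S.Nonempty →
    (∀ u ∈ S, ∀ v ∈ S, RIn G S u v) →
    ∃ D : DT V, DT.verts D = S ∧ DT.IsValidOn G D S ∧
      DT.depth D ≤ Nat.log 2 S.card + 1 := by
  intro N
  induction N with
  | zero =>
    intro S hcard hne
    have := hne.card_pos
    omega
  | succ N ih =>
    intro S hcard hne hconn
    obtain ⟨q, hq, hcent⟩ := centroid hac S hne hconn
    set A := S.erase q with hA
    have hAcard : A.card = S.card - 1 := Finset.card_erase_of_mem hq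
    set K := A.image (fun v => compF G A v) with hK
    have hP : ∀ B ∈ K, ∃ D : DT V, DT.verts D = B ∧ DT.IsValidOn G D B ∧
        DT.depth D ≤ Nat.log 2 B.card + 1 := by
      intro B hB
      obtain ⟨w, hw, rfl⟩ := Finset.mem_image.1 hB
      refine ih _ ?_ ⟨w, self_mem_compF hw⟩ (fun u hu v hv => rin_compF hu hv)
      have h1 : (compF G A w).card ≤ A.card := Finset.card_le_card compF_subset
      omega
    haveI : Inhabited (DT V) := ⟨DT.node q []⟩
    choose! f hf1 hf2 hf3 using hP
    set ds := K.toList.map f with hds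
    have mem_ds : ∀ d ∈ ds, ∃ B ∈ K, f B = d := by
      intro d hd
      obtain ⟨B, hB, rfl⟩ := List.mem_map.1 hd
      exact ⟨B, Finset.mem_toList.1 hB, rfl⟩
    have hcomp : ∀ B ∈ K, ∃ w ∈ A, compF G A w = B := by
      intro B hB; exact Finset.mem_image.1 hB
    have hverts : DT.verts (DT.node q ds) = S := by
      ext x
      rw [DT.mem_verts_node]
      constructor
      · rintro (rfl | ⟨d, hd, hx⟩)
        · exact hq
        · obtain ⟨B, hBK, rfl⟩ := mem_ds d hd
          rw [hf1 B hBK] at hx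
          obtain ⟨w, hwA, rfl⟩ := hcomp B hBK
          exact Finset.mem_of_mem_erase (compF_subset hx)
      · intro hxS
        rcases eq_or_ne x q with rfl | hxq
        · exact Or.inl rfl
        · have hxA : x ∈ A := Finset.mem_erase.2 ⟨hxq, hxS⟩
          have hBK : compF G A x ∈ K := Finset.mem_image_of_mem _ hxA
          refine Or.inr ⟨f (compF G A x), List.mem_map.2 ⟨_, Finset.mem_toList.2 hBK, rfl⟩, ?_⟩
          rw [hf1 _ hBK]
          exact self_mem_compF hxA
    have hvalid : DT.IsValidOn G (DT.node q ds) S := by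
      rw [DT.IsValidOn]
      refine ⟨hq, ?_, ?_, ?_, ?_⟩
      · intro d hd
        obtain ⟨B, hBK, rfl⟩ := mem_ds d hd
        rw [hf1 B hBK]
        obtain ⟨w, hwA, rfl⟩ := hcomp B hBK
        exact ⟨compF_subset, ⟨w, self_mem_compF hwA⟩, induce_connected_compF hwA,
          fun u hu x hx hxc => not_adj_of_compF hu hx hxc⟩
      · intro x hx
        have hBK : compF G A x ∈ K := Finset.mem_image_of_mem _ hx
        refine ⟨f (compF G A x), List.mem_map.2 ⟨_, Finset.mem_toList.2 hBK, rfl⟩, ?_⟩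
        rw [hf1 _ hBK]
        exact self_mem_compF hx
      · intro d hd d' hd' hne'
        obtain ⟨B, hBK, rfl⟩ := mem_ds d hd
        obtain ⟨B', hBK', rfl⟩ := mem_ds d' hd'
        have hBB' : B ≠ B' := fun h => hne' (by rw [h])
        rw [hf1 B hBK, hf1 B' hBK']
        obtain ⟨w, hwA, rfl⟩ := hcomp B hBK
        obtain ⟨w', hwA', rfl⟩ := hcomp B' hBK'
        exact compF_disjoint hBB'
      · intro d _
        obtain ⟨B, hBK, hfB⟩ := mem_ds d.1 d.2
        rw [← hfB, hf1 B hBK]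
        exact hf2 B hBK
    have hdepth : DT.depth (DT.node q ds) ≤ Nat.log 2 S.card + 1 := by
      rw [DT.depth_node]
      have hall : ∀ a ∈ (ds.attach.map fun d => DT.depth d.1), a ≤ Nat.log 2 S.card := by
        intro a ha
        obtain ⟨d, _, rfl⟩ := List.mem_map.1 ha
        obtain ⟨B, hBK, hfB⟩ := mem_ds d.1 d.2
        rw [← hfB]
        obtain ⟨w, hwA, rfl⟩ := hcomp B hBK
        have hS2 : 2 ≤ S.card := by
          have h1 : 0 < A.card := Finset.card_pos.2 ⟨w, hwA⟩
          omega
        have h1 : Nat.log 2 (compF G A w).card ≤ Nat.log 2 (S.card / 2) :=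
          Nat.log_mono_right (hcent w hwA)
        have h2 : Nat.log 2 (S.card / 2) = Nat.log 2 S.card - 1 := Nat.log_div_base 2 S.card
        have h3 : 0 < Nat.log 2 S.card := Nat.log_pos one_lt_two hS2
        have h4 := hf3 _ hBK
        omega
      have := foldr_max_le hall
      omega
    exact ⟨DT.node q ds, hverts, hvalid, hdepth⟩

end Build


/-- A tree on `n` vertices with uniform query costs admits a
decision tree whose depth (worst-case number of queries) is at most
`⌊log₂ n⌋ + 1`. -/
theorem stmt2 {V : Type} [DecidableEq V] [Fintype V] (G : SimpleGraph V) (hG : G.IsTree)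
    (n : ℕ) (hn : Fintype.card V = n)
    (c : V → ℝ) (hc : ∀ v, c v = 1) :
    ∃ D : DT V, DT.IsDecisionTree G D ∧ DT.depth D ≤ Nat.log 2 n + 1 := by
  have hne : Nonempty V := hG.isConnected.nonempty
  have hconn : ∀ u ∈ (Finset.univ : Finset V), ∀ v ∈ (Finset.univ : Finset V),
      RIn G Finset.univ u v := by
    intro u _ v _
    obtain ⟨p⟩ := hG.isConnected.preconnected u v
    exact ⟨p, fun x _ => Finset.mem_univ x⟩
  obtain ⟨D, -, hvalid, hdepth⟩ := build hG.IsAcyclic (Fintype.card V) Finset.univ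
    (le_of_eq Finset.card_univ) Finset.univ_nonempty hconn
  refine ⟨D, hvalid, ?_⟩
  rwa [Finset.card_univ, hn] at hdepth
end

section
/- For any tree T with cost function c, threshold t ∈ ℝ≥0, subtree T' of T, and heavy module H of T with respect to t: if H ∩ V(T') is nonempty then H ∩ V(T') induces a connected subtree of T'. Consequently, each heavy module of T contributes at most one heavy module to T', giving k(T', c, t) ≤ k(T, c, t). -/
open SimpleGraph

/-- `H` is a heavy module of `G` w.r.t. threshold `t`: a maximal vertex set
inducing a connected subgraph all of whose vertices have cost exceeding `t`. -/
def IsHeavyModule {V : Type} (G : SimpleGraph V) (c : V → ℝ) (t : ℝ) (H : Set V) : Prop :=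
  (G.induce H).Connected ∧ (∀ v ∈ H, t < c v) ∧
    ∀ H' : Set V, H ⊆ H' → (G.induce H').Connected → (∀ v ∈ H', t < c v) → H' = H

/-- The number `k(T,c,t)` of heavy modules with respect to threshold `t`. -/
noncomputable def numHeavy {V : Type} (G : SimpleGraph V) (c : V → ℝ) (t : ℝ) : ℕ :=
  {H : Set V | IsHeavyModule G c t H}.ncard

/-- The up-modularity parameter `k(T,c)`: the maximum over all thresholds
`t ≥ 0` of the number of heavy modules. -/
noncomputable def kval {V : Type} (G : SimpleGraph V) (c : V → ℝ) : ℕ :=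
  sSup {m : ℕ | ∃ t : ℝ, 0 ≤ t ∧ m = numHeavy G c t}

/-!
In a forest the path between two vertices is unique, so it stays inside every connected vertex
set containing both ends; hence the intersection of two connected vertex sets is connected. Each
heavy module of the subtree `T[S]` therefore extends to a heavy module `M` of `T` whose trace
`M ∩ S` is connected and heavy, and by maximality equals the module itself. So the heavy modules
of `T[S]` are traces of heavy modules of `T`, and there are at most as many of them.
-/

namespace SimpleGraph

variable {V : Type} {G : SimpleGraph V}

theorem IsAcyclic.support_subset_of_preconnected_induce (hG : G.IsAcyclic) {s : Set V}
    (hs : (G.induce s).Preconnected) {u v : V} (hu : u ∈ s) (hv : v ∈ s) (p : G.Path u v) :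
    {x | x ∈ p.1.support} ⊆ s := by
  classical
  obtain ⟨w⟩ := hs ⟨u, hu⟩ ⟨v, hv⟩
  let q := w.map (Embedding.induce s).toHom
  rw [(hG.subsingleton_path u v).elim p q.toPath]
  intro x hx
  obtain ⟨y, -, rfl⟩ := List.mem_map.mp (Walk.support_map _ w ▸ q.support_toPath_subset_support hx)
  exact y.2

theorem IsAcyclic.induce_inter_connected (hG : G.IsAcyclic) {s t : Set V}
    (hs : (G.induce s).Connected) (ht : (G.induce t).Connected) (hst : (s ∩ t).Nonempty) :
    (G.induce (s ∩ t)).Connected := by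
  classical
  obtain ⟨u, hus, hut⟩ := hst
  refine G.induce_connected_of_patches u ⟨hus, hut⟩ fun {v} ⟨hvs, hvt⟩ => ?_
  let p : G.Path u v := (hs.preconnected ⟨u, hus⟩ ⟨v, hvs⟩).some.map
    (Embedding.induce s).toHom |>.toPath
  refine ⟨{x | x ∈ p.1.support}, fun x hx => ⟨?_, ?_⟩, p.1.start_mem_support, p.1.end_mem_support,
    p.1.connected_induce_support.preconnected _ _⟩
  · exact hG.support_subset_of_preconnected_induce hs.preconnected hus hvs p hx
  · exact hG.support_subset_of_preconnected_induce ht.preconnected hut hvt p hx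

noncomputable def induceInduceIso (G : SimpleGraph V) (s : Set V) (a : Set s) :
    (G.induce s).induce a ≃g G.induce (Subtype.val '' a) where
  toEquiv := Equiv.Set.image Subtype.val a Subtype.val_injective
  map_rel_iff' := Iff.rfl

end SimpleGraph

section HeavyModule

variable {V : Type} {G : SimpleGraph V} {c : V → ℝ} {t : ℝ}

theorem isHeavyModule_iff_maximal {H : Set V} :
    IsHeavyModule G c t H ↔ Maximal (fun A => (G.induce A).Connected ∧ ∀ v ∈ A, t < c v) H :=
  ⟨fun ⟨hconn, hheavy, hmax⟩ => ⟨⟨hconn, hheavy⟩, fun A ⟨hA, hAc⟩ hle => (hmax A hle hA hAc).le⟩,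
    fun ⟨⟨hconn, hheavy⟩, hmax⟩ =>
      ⟨hconn, hheavy, fun _ hle hA hAc => (hmax ⟨hA, hAc⟩ hle).antisymm hle⟩⟩

theorem exists_isHeavyModule_superset [Finite V] {B : Set V} (hB : (G.induce B).Connected)
    (hBt : ∀ v ∈ B, t < c v) : ∃ M, IsHeavyModule G c t M ∧ B ⊆ M := by
  obtain ⟨M, hBM, hM⟩ := Finite.exists_le_maximal (α := Set V) (p := fun A =>
    (G.induce A).Connected ∧ ∀ v ∈ A, t < c v) ⟨hB, hBt⟩
  exact ⟨M, isHeavyModule_iff_maximal.mpr hM, hBM⟩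

theorem IsHeavyModule.exists_eq_preimage_val [Finite V] (hG : G.IsAcyclic) {S : Set V}
    (hS : (G.induce S).Connected) {H : Set S} (hH : IsHeavyModule (G.induce S) (fun v => c v) t H) :
    ∃ M, IsHeavyModule G c t M ∧ Subtype.val ⁻¹' M = H := by
  obtain ⟨hconn, hheavy, hmax⟩ := hH
  obtain ⟨M, hM, hHM⟩ := exists_isHeavyModule_superset
    ((induceInduceIso G S H).connected_iff.mp hconn) (by rintro _ ⟨v, hv, rfl⟩; exact hheavy v hv)
  have hHM' : H ⊆ Subtype.val ⁻¹' M := fun v hv => hHM ⟨v, hv, rfl⟩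
  have htrace : ((G.induce S).induce (Subtype.val ⁻¹' M)).Connected := by
    rw [(induceInduceIso G S _).connected_iff, Subtype.image_preimage_coe]
    obtain ⟨⟨v, hv⟩⟩ := hconn.nonempty
    exact hG.induce_inter_connected hS hM.1 ⟨v, v.2, hHM' hv⟩
  exact ⟨M, hM, hmax _ hHM' htrace fun v => hM.2.1 v⟩

theorem numHeavy_induce_le [Finite V] (hG : G.IsAcyclic) {S : Set V}
    (hS : (G.induce S).Connected) : numHeavy (G.induce S) (fun v => c v) t ≤ numHeavy G c t :=
  calc numHeavy (G.induce S) (fun v => c v) t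
      ≤ (Set.preimage Subtype.val '' {M | IsHeavyModule G c t M}).ncard :=
        Set.ncard_le_ncard (fun _ hH => (hH.exists_eq_preimage_val hG hS).imp fun _ => id)
          (Set.toFinite _)
    _ ≤ numHeavy G c t := Set.ncard_image_le (Set.toFinite _)

end HeavyModule

theorem stmt5_general {V : Type} [Fintype V] (G : SimpleGraph V) (hG : G.IsTree)
    (c : V → ℝ) (t : ℝ)
    (S : Set V) (hS : (G.induce S).Connected)
    (H : Set V) (hH : IsHeavyModule G c t H) :
    ((H ∩ S).Nonempty → (G.induce (H ∩ S)).Connected) ∧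
      numHeavy (G.induce S) (fun v => c v.1) t ≤ numHeavy G c t :=
  ⟨hG.isAcyclic.induce_inter_connected hH.1 hS, numHeavy_induce_le hG.isAcyclic hS⟩

/-- For a heavy module `H` of `T` w.r.t. `t` and a subtree `T'`
(induced on `S`): if `H ∩ S` is nonempty then it induces a connected subgraph,
and consequently `k(T',c,t) ≤ k(T,c,t)`. -/
theorem stmt5 {V : Type} [Fintype V] (G : SimpleGraph V) (hG : G.IsTree)
    (c : V → ℝ) (hpos : ∀ v, 0 < c v) (t : ℝ) (ht : 0 ≤ t)
    (S : Set V) (hS : (G.induce S).Connected)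
    (H : Set V) (hH : IsHeavyModule G c t H) :
    ((H ∩ S).Nonempty → (G.induce (H ∩ S)).Connected) ∧
      numHeavy (G.induce S) (fun v => c v.1) t ≤ numHeavy G c t :=
  stmt5_general G hG c t S hS H hH
end

section
/- A cost function c is 1-up-modular in a tree T if and only if c is up-monotonic in T, i.e., for every u ∈ V(T) and every vertex v on the path from z = argmax_{w ∈ V(T)} c(w) to u, we have c(v) ≥ c(u). -/
open SimpleGraph

section Aux
variable {V : Type} {G : SimpleGraph V}

def Hset (G : SimpleGraph V) (c : V → ℝ) (t : ℝ) (x : V) : Set V :=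
  {w | ∃ p : G.Walk x w, ∀ v ∈ p.support, t < c v}

lemma reach_induce {S : Set V} {x w : V} (p : G.Walk x w)
    (hp : ∀ v ∈ p.support, v ∈ S) (hx : x ∈ S) (hw : w ∈ S) :
    (G.induce S).Reachable ⟨x, hx⟩ ⟨w, hw⟩ := by
  induction p with
  | nil => rfl
  | @cons a b d h q ih =>
    have hb : b ∈ S := hp b (by simp)
    have : (G.induce S).Adj ⟨a, hx⟩ ⟨b, hb⟩ := by simpa using h
    exact this.reachable.trans (ih (fun v hv => hp v (by simp [hv])) hb hw)

lemma walk_of_induce {S : Set V} {a b : S} (p : (G.induce S).Walk a b) :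
    ∃ q : G.Walk a.1 b.1, ∀ v ∈ q.support, v ∈ S := by
  induction p with
  | nil => exact ⟨SimpleGraph.Walk.nil, by simp⟩
  | @cons u w d h q ih =>
    obtain ⟨q', hq'⟩ := ih
    have hadj : G.Adj u.1 w.1 := by simpa using h
    refine ⟨SimpleGraph.Walk.cons hadj q', ?_⟩
    intro v hv
    rcases (SimpleGraph.Walk.mem_support_iff _).1 hv with rfl | hv
    · exact u.2
    · exact hq' v hv

lemma mem_Hset_self {c : V → ℝ} {t : ℝ} {x : V} (hx : t < c x) : x ∈ Hset G c t x :=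
  ⟨SimpleGraph.Walk.nil, by simpa using hx⟩

lemma Hset_support_mem {c : V → ℝ} {t : ℝ} {x w : V} (p : G.Walk x w)
    (hp : ∀ v ∈ p.support, t < c v) : ∀ v ∈ p.support, v ∈ Hset G c t x := by
  classical
  intro v hv
  exact ⟨p.takeUntil v hv, fun a ha => hp a (p.support_takeUntil_subset hv ha)⟩

lemma Hset_isHeavy {c : V → ℝ} {t : ℝ} {x : V} (hx : t < c x) :
    IsHeavyModule G c t (Hset G c t x) := by
  have hxH : x ∈ Hset G c t x := mem_Hset_self hx
  have hreach : ∀ w (hw : w ∈ Hset G c t x),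
      (G.induce (Hset G c t x)).Reachable ⟨x, hxH⟩ ⟨w, hw⟩ := by
    rintro w ⟨p, hp⟩
    exact reach_induce p (Hset_support_mem p hp) hxH ⟨p, hp⟩
  refine ⟨?_, ?_, ?_⟩
  · have : Nonempty ↑(Hset G c t x) := ⟨⟨x, hxH⟩⟩
    exact SimpleGraph.Connected.mk (by
      rintro ⟨a, ha⟩ ⟨b, hb⟩
      exact (hreach a ha).symm.trans (hreach b hb))
  · rintro v ⟨p, hp⟩
    exact hp v p.end_mem_support
  · intro H' hsub hconn hcost
    refine Set.Subset.antisymm ?_ hsub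
    intro w hw
    obtain ⟨q⟩ := hconn.preconnected ⟨x, hsub hxH⟩ ⟨w, hw⟩
    obtain ⟨q', hq'⟩ := walk_of_induce q
    exact ⟨q', fun v hv => hcost v (hq' v hv)⟩

lemma reach_mono {A C : Set V} (hAC : A ⊆ C) (hA : (G.induce A).Connected)
    {a b : V} (ha : a ∈ A) (hb : b ∈ A) :
    (G.induce C).Reachable ⟨a, hAC ha⟩ ⟨b, hAC hb⟩ := by
  obtain ⟨q⟩ := hA.preconnected ⟨a, ha⟩ ⟨b, hb⟩
  obtain ⟨q', hq'⟩ := walk_of_induce q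
  exact reach_induce q' (fun v hv => hAC (hq' v hv)) _ _

end Aux

/-- A cost function is 1-up-modular in a tree `T` iff it is
up-monotonic: for a maximum-cost vertex `z`, every vertex `v` on the path from
`z` to any vertex `u` satisfies `c v ≥ c u`. -/
theorem stmt6 {V : Type} [Fintype V] [Nonempty V] (G : SimpleGraph V) (hG : G.IsTree)
    (c : V → ℝ) (hpos : ∀ v, 0 < c v) :
    (∀ t : ℝ, 0 ≤ t → numHeavy G c t ≤ 1) ↔
      (∃ z : V, (∀ w, c w ≤ c z) ∧
        ∀ u : V, ∀ p : G.Walk z u, p.IsPath → ∀ v ∈ p.support, c u ≤ c v) := by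
  classical
  constructor
  · intro h1
    obtain ⟨z, hz⟩ := Finite.exists_max c
    refine ⟨z, hz, ?_⟩
    intro u p hp v hv
    by_contra hlt
    push_neg at hlt
    set t := c v with ht
    have ht0 : (0:ℝ) ≤ t := (hpos v).le
    have hcu : t < c u := hlt
    have hcz : t < c z := lt_of_lt_of_le hcu (hz u)
    have hne : Hset G c t z ≠ Hset G c t u := by
      intro heq
      have hu : u ∈ Hset G c t z := heq ▸ mem_Hset_self hcu
      obtain ⟨q, hq⟩ := hu
      have hpq : (q.toPath : G.Walk z u) = p :=
        (hG.existsUnique_path z u).unique q.toPath.2 hp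
      have hv2 : v ∈ (q.toPath : G.Walk z u).support := by rw [hpq]; exact hv
      exact lt_irrefl t (hq v (q.support_toPath_subset hv2))
    have h2 : 1 < numHeavy G c t := by
      rw [numHeavy, Set.one_lt_ncard_iff (Set.toFinite _)]
      exact ⟨_, _, Hset_isHeavy hcz, Hset_isHeavy hcu, hne⟩
    have := h1 t ht0
    omega
  · rintro ⟨z, hz, hmono⟩ t ht0
    -- every heavy module contains z
    have hzmem : ∀ H : Set V, IsHeavyModule G c t H → z ∈ H := by
      intro H hH
      obtain ⟨⟨u, hu⟩⟩ := hH.1.nonempty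
      have hcu : t < c u := hH.2.1 u hu
      obtain ⟨q⟩ := hG.isConnected.preconnected z u
      set p0 : G.Walk z u := (q.toPath : G.Walk z u) with hp0
      have hmono' : ∀ v ∈ p0.support, c u ≤ c v := hmono u p0 q.toPath.2
      set H' : Set V := H ∪ {v | v ∈ p0.support} with hH'
      have hsubH : H ⊆ H' := Set.subset_union_left
      have huH' : u ∈ H' := Or.inl hu
      have key : ∀ a, (ha : a ∈ H') → (G.induce H').Reachable ⟨a, ha⟩ ⟨u, huH'⟩ := by
        intro a ha
        rcases ha with haH | haP
        · exact reach_mono hsubH hH.1 haH hu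
        · have hdrop : ∀ w ∈ (p0.dropUntil a haP).support, w ∈ H' :=
            fun w hw => Or.inr (p0.support_dropUntil_subset haP hw)
          exact reach_induce (p0.dropUntil a haP) hdrop _ _
      have hconn : (G.induce H').Connected := by
        have : Nonempty ↑H' := ⟨⟨u, huH'⟩⟩
        exact SimpleGraph.Connected.mk (by
          rintro ⟨a, ha⟩ ⟨b, hb⟩
          exact (key a ha).trans (key b hb).symm)
      have hcost : ∀ v ∈ H', t < c v := by
        rintro v (hvH | hvP)
        · exact hH.2.1 v hvH
        · exact lt_of_lt_of_le hcu (hmono' v hvP)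
      have hEq : H' = H := hH.2.2 H' hsubH hconn hcost
      have : z ∈ H' := Or.inr p0.start_mem_support
      rwa [hEq] at this
    rw [numHeavy, Set.ncard_le_one_iff (Set.toFinite _)]
    intro H1 H2 h1 h2
    have hz1 : z ∈ H1 := hzmem H1 h1
    have hz2 : z ∈ H2 := hzmem H2 h2
    set H' : Set V := H1 ∪ H2 with hH'
    have hzH' : z ∈ H' := Or.inl hz1
    have key : ∀ a, (ha : a ∈ H') → (G.induce H').Reachable ⟨a, ha⟩ ⟨z, hzH'⟩ := by
      intro a ha
      rcases ha with h | h
      · exact reach_mono Set.subset_union_left h1.1 h hz1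
      · exact reach_mono Set.subset_union_right h2.1 h hz2
    have hconn : (G.induce H').Connected := by
      have : Nonempty ↑H' := ⟨⟨z, hzH'⟩⟩
      exact SimpleGraph.Connected.mk (by
        rintro ⟨a, ha⟩ ⟨b, hb⟩
        exact (key a ha).trans (key b hb).symm)
    have hcost : ∀ v ∈ H', t < c v := by
      rintro v (h | h)
      · exact h1.2.1 v h
      · exact h2.2.1 v h
    have e1 : H' = H1 := h1.2.2 H' Set.subset_union_left hconn hcost
    have e2 : H' = H2 := h2.2.2 H' Set.subset_union_right hconn hcost
    rw [← e1, e2]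
end

section
/- Let T be a tree, T' a subtree of T, and D a partial decision tree for T that contains no queries to vertices of T' but at least one query to a vertex in N_T(V(T')). Then the set Q of all queries in D to vertices of N_T(V(T')) lies on a single root-to-leaf path in D, i.e., the minimal subtree of D containing Q is a path. -/
open SimpleGraph

namespace DT

variable {V : Type} [DecidableEq V]

namespace Stmt8Aux
lemma mem_foldr_union {v : V} (L : List (Finset V)) :
    v ∈ L.foldr (· ∪ ·) ∅ ↔ ∃ s ∈ L, v ∈ s := by
  induction L with
  | nil => simp
  | cons a L ih => simp [ih]

lemma mem_verts_node {v q : V} {ch : List (DT V)} :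
    v ∈ verts (.node q ch) ↔ v = q ∨ ∃ d ∈ ch, v ∈ verts d := by
  rw [verts]; simp [mem_foldr_union]

lemma verts_prefix_subset : ∀ {c F : DT V}, IsPrefixOf c F → verts c ⊆ verts F
  | .node q' ch', .node q ch, h => by
    rw [IsPrefixOf] at h
    obtain ⟨rfl, hch⟩ := h
    intro v hv
    rw [mem_verts_node] at hv ⊢
    rcases hv with rfl | ⟨d', hd', hv⟩
    · exact Or.inl rfl
    · obtain ⟨d, hd, hp⟩ := hch ⟨d', hd'⟩ (List.mem_attach _ _)
      exact Or.inr ⟨d, hd, verts_prefix_subset hp hv⟩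
termination_by c => sizeOf c
decreasing_by simp only [DT.node.sizeOf_spec]; have := List.sizeOf_lt_of_mem hd'; omega

lemma verts_valid_subset {G : SimpleGraph V} {q : V} {ch : List (DT V)} {C : Finset V}
    (h : IsValidOn G (.node q ch) C) : verts (.node q ch) ⊆ C := by
  rw [IsValidOn] at h
  intro v hv
  rw [mem_verts_node] at hv
  rcases hv with rfl | ⟨d, hd, hv⟩
  · exact h.1
  · exact Finset.mem_of_mem_erase ((h.2.1 d hd).1 hv)

lemma ancestor_root {q : V} {ch : List (DT V)} {w : V} (hw : w ∈ verts (.node q ch)) :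
    Ancestor (.node q ch) q w := by
  rw [Ancestor]; exact Or.inl ⟨rfl, hw⟩

lemma ancestor_child {q : V} {ch : List (DT V)} {d : DT V} (hd : d ∈ ch) {u w : V}
    (h : Ancestor d u w) : Ancestor (.node q ch) u w := by
  rw [Ancestor]; exact Or.inr ⟨⟨d, hd⟩, List.mem_attach _ _, h⟩

/-- The component of the candidate set containing the connected set `S`. -/
lemma S_in_one_child {G : SimpleGraph V} {S : Set V} (hS : (G.induce S).Connected)
    {q : V} {ch : List (DT V)} {C : Finset V}
    (h : IsValidOn G (.node q ch) C) (hSC : S ⊆ ↑C) (hqS : q ∉ S) :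
    ∃ d ∈ ch, S ⊆ ↑(verts d) := by
  rw [IsValidOn] at h
  obtain ⟨hq, hch, hcover, hdis, hval⟩ := h
  obtain ⟨s0⟩ := hS.nonempty
  have hs0 : (s0 : V) ∈ C.erase q :=
    Finset.mem_erase.2 ⟨fun e => hqS (e ▸ s0.2), hSC s0.2⟩
  obtain ⟨d, hd, hs0d⟩ := hcover _ hs0
  refine ⟨d, hd, fun v hv => ?_⟩
  have := hS.preconnected s0 ⟨v, hv⟩
  obtain ⟨p⟩ := this
  clear hs0
  have key : ∀ (a b : ↥S), (G.induce S).Walk a b → (a : V) ∈ verts d → (b : V) ∈ verts d := by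
    intro a b p
    induction p with
    | nil => exact id
    | @cons x y z hxy p ih =>
      intro hx
      apply ih
      by_contra hy
      have hyC : (y : V) ∈ C.erase q :=
        Finset.mem_erase.2 ⟨fun e => hqS (e ▸ y.2), hSC y.2⟩
      exact (hch d hd).2.2.2 x hx y hyC hy hxy
  exact key _ _ p hs0d

lemma nbr_in_child {G : SimpleGraph V} {S : Set V} {r : V} {ch : List (DT V)} {C : Finset V}
    {d : DT V} {u : V}
    (hval : IsValidOn G (.node r ch) C) (hd : d ∈ ch) (hSd : S ⊆ ↑(verts d))
    (huC : u ∈ C) (hur : u ≠ r) (hadj : ∃ s ∈ S, G.Adj s u) : u ∈ verts d := by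
  rw [IsValidOn] at hval
  obtain ⟨s, hsS, hadj⟩ := hadj
  by_contra hud
  exact (hval.2.1 d hd).2.2.2 s (hSd hsS) u (Finset.mem_erase.2 ⟨hur, huC⟩) hud hadj

lemma main_lemma (G : SimpleGraph V) (S : Set V) (hS : (G.induce S).Connected)
    (N : Set V) (hN : N = {v | v ∉ S ∧ ∃ u ∈ S, G.Adj u v}) :
    ∀ (n : ℕ) (F : DT V), sizeOf F ≤ n → ∀ (C : Finset V), IsValidOn G F C → S ⊆ ↑C →
    ∀ (c1 c2 : DT V), IsPrefixOf c1 F → IsPrefixOf c2 F →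
    (∀ v ∈ verts c1, v ∉ S) → (∀ v ∈ verts c2, v ∉ S) →
    ∀ u ∈ verts c1, u ∈ N → ∀ w ∈ verts c2, w ∈ N →
    Ancestor c1 u w ∨ Ancestor c1 w u ∨ Ancestor c2 u w ∨ Ancestor c2 w u := by
  subst hN
  intro n
  induction n with
  | zero =>
    intro F hF
    obtain ⟨r, chF⟩ := F
    simp [DT.node.sizeOf_spec] at hF
  | succ n ih =>
    intro F hF C hval hSC c1 c2 hp1 hp2 hc1S hc2S u hu huN w hw hwN
    obtain ⟨r, chF⟩ := F
    obtain ⟨r1, ch1⟩ := c1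
    obtain ⟨r2, ch2⟩ := c2
    have hp1' := hp1
    have hp2' := hp2
    rw [IsPrefixOf] at hp1 hp2
    obtain ⟨h1, hp1⟩ := hp1
    obtain ⟨h2, hp2⟩ := hp2
    subst h1; subst h2
    have hrS : r2 ∉ S := hc1S r2 (mem_verts_node.2 (Or.inl rfl))
    by_cases hur : u = r2
    · subst hur
      exact Or.inr (Or.inr (Or.inl (ancestor_root hw)))
    by_cases hwr : w = r2
    · subst hwr
      exact Or.inr (Or.inl (ancestor_root hu))
    -- the child of F containing S
    obtain ⟨d, hd, hSd⟩ := S_in_one_child hS hval hSC hrS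
    have huC : u ∈ C := verts_valid_subset hval (verts_prefix_subset hp1' hu)
    have hwC : w ∈ C := verts_valid_subset hval (verts_prefix_subset hp2' hw)
    have hud : u ∈ verts d := nbr_in_child hval hd hSd huC hur huN.2
    have hwd : w ∈ verts d := nbr_in_child hval hd hSd hwC hwr hwN.2
    -- u, w lie in children of c1, c2
    obtain ⟨a1, ha1, hua1⟩ := (mem_verts_node.1 hu).resolve_left hur
    obtain ⟨a2, ha2, hwa2⟩ := (mem_verts_node.1 hw).resolve_left hwr
    obtain ⟨f1, hf1, hpf1⟩ := hp1 ⟨a1, ha1⟩ (List.mem_attach _ _)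
    obtain ⟨f2, hf2, hpf2⟩ := hp2 ⟨a2, ha2⟩ (List.mem_attach _ _)
    have hval' := hval
    rw [IsValidOn] at hval'
    have hf1d : f1 = d := by
      by_contra hne
      exact Finset.disjoint_left.1 (hval'.2.2.2.1 f1 hf1 d hd hne)
        (verts_prefix_subset hpf1 hua1) hud
    have hf2d : f2 = d := by
      by_contra hne
      exact Finset.disjoint_left.1 (hval'.2.2.2.1 f2 hf2 d hd hne)
        (verts_prefix_subset hpf2 hwa2) hwd
    subst hf1d; subst hf2d
    have hvd : IsValidOn G f2 (verts f2) := hval'.2.2.2.2 ⟨f2, hd⟩ (List.mem_attach _ _)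
    have hszd : sizeOf f2 ≤ n := by
      have h2 := List.sizeOf_lt_of_mem hd
      simp only [DT.node.sizeOf_spec] at hF
      omega
    have ha1S : ∀ v ∈ verts a1, v ∉ S :=
      fun v hv => hc1S v (mem_verts_node.2 (Or.inr ⟨a1, ha1, hv⟩))
    have ha2S : ∀ v ∈ verts a2, v ∉ S :=
      fun v hv => hc2S v (mem_verts_node.2 (Or.inr ⟨a2, ha2, hv⟩))
    rcases ih f2 hszd (verts f2) hvd hSd a1 a2 hpf1 hpf2 ha1S ha2S u hua1 huN w hwa2 hwN with
      h | h | h | h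
    · exact Or.inl (ancestor_child ha1 h)
    · exact Or.inr (Or.inl (ancestor_child ha1 h))
    · exact Or.inr (Or.inr (Or.inl (ancestor_child ha2 h)))
    · exact Or.inr (Or.inr (Or.inr (ancestor_child ha2 h)))

end Stmt8Aux
end DT

/-- Let `T'` be a subtree of `T` (induced on `S`) and `D` a
partial decision tree for `T` with no queries in `S` but at least one query to
a neighbour of `S`. Then all queries of `D` to neighbours of `S` lie on one
root-to-leaf path of `D` (they are pairwise in ancestor relation). -/
theorem stmt8 {V : Type} [DecidableEq V] [Fintype V] (G : SimpleGraph V) (hG : G.IsTree)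
    (S : Set V) (hS : (G.induce S).Connected)
    (Dfull D : DT V) (hfull : DT.IsDecisionTree G Dfull) (hpre : DT.IsPrefixOf D Dfull)
    (hdisj : ∀ v ∈ DT.verts D, v ∉ S)
    (N : Set V) (hN : N = {v | v ∉ S ∧ ∃ u ∈ S, G.Adj u v})
    (hone : ∃ v ∈ DT.verts D, v ∈ N) :
    ∀ u ∈ DT.verts D, u ∈ N → ∀ w ∈ DT.verts D, w ∈ N →
      DT.Ancestor D u w ∨ DT.Ancestor D w u := by
  intro u hu huN w hw hwN
  have h := DT.Stmt8Aux.main_lemma G S hS N hN (sizeOf Dfull) Dfull le_rfl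
    Finset.univ hfull (by simp) D D hpre hpre hdisj hdisj u hu huN w hw hwN
  tauto
end

section
/- Let T be a tree with cost c that is k-up-modular, let a > 0 be a threshold, let H be the set of heavy modules with respect to a, and let X contain exactly one vertex from each heavy module. Let Y = X ∪ {v ∈ V(T⟨X⟩) : deg_{T⟨X⟩}(v) ≥ 3}, and let Z be obtained from Y by adding, for each pair u, v ∈ Y whose connecting path in T is nonempty and internally disjoint from Y, one vertex of that path. Then |Z| ≤ 4k − 3. -/
open SimpleGraph

/-- The vertex set of the Steiner tree `T⟨X⟩`: all vertices lying on a path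
between two vertices of `X`. -/
def SteinerSet {V : Type} (G : SimpleGraph V) (X : Set V) : Set V :=
  {v | ∃ u ∈ X, ∃ w ∈ X, ∃ p : G.Walk u w, p.IsPath ∧ v ∈ p.support}

/-- The internal vertices of a walk (its support without the two endpoints). -/
def InternalOf {V : Type} {u v : V} (G : SimpleGraph V) (p : G.Walk u v) : List V :=
  p.support.tail.dropLast

/-! Every heavy module contains exactly one vertex of `X`, so `|X| ≤ k`. All leaves of the
Steiner tree `T⟨X⟩` lie in `X`, and in a tree with at least two vertices the degree sum
`2|V| - 2` forces fewer vertices of degree `≥ 3` than leaves; hence `|Y| ≤ 2|X| - 1 ≤ 2k - 1`.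
If `u, v ∈ Y` are joined by a `Y`-free path, a vertex of that path where the path to a root
`r ∈ Y` branches off would have three neighbours in `T⟨X⟩` and so belong to `Y`; thus one of
`u, v` lies on the path from the other to `r`. The pairs are therefore the edges of a tree on
`Y` rooted at `r`, each determined by its lower endpoint, so they contribute at most `|Y| - 1`
vertices and `|Z| ≤ 2|Y| - 1 ≤ 4k - 3`. -/

namespace Set

theorem ncard_le_ncard_of_subset_sUnion {α : Type*} {X : Set α} {𝓗 : Set (Set α)}
    (h𝓗 : 𝓗.Finite) (hX : X ⊆ ⋃₀ 𝓗) (hsub : ∀ H ∈ 𝓗, (X ∩ H).Subsingleton) :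
    X.ncard ≤ 𝓗.ncard := by
  choose! φ hφ𝓗 hφ using fun x (hx : x ∈ X) => mem_sUnion.mp (hX hx)
  refine ncard_le_ncard_of_injOn φ hφ𝓗 (fun x hx y hy hxy => ?_) h𝓗
  exact hsub _ (hφ𝓗 x hx) ⟨hx, hφ x hx⟩ ⟨hy, hxy ▸ hφ y hy⟩

end Set

namespace SimpleGraph

section General

variable {V : Type*} {G : SimpleGraph V}

namespace Walk

theorem exists_append_first_mem {r u : V} (q : G.Walk r u) {S : Set V} (hu : u ∈ S) :
    ∃ m ∈ S, ∃ (q₁ : G.Walk r m) (q₂ : G.Walk m u),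
      q = q₁.append q₂ ∧ ∀ x ∈ q₁.support, x ∈ S → x = m := by
  induction q with
  | nil => exact ⟨_, hu, nil, nil, rfl, by simp⟩
  | @cons r w u h q ih =>
    by_cases hr : r ∈ S
    · exact ⟨r, hr, nil, cons h q, rfl, by simp⟩
    · obtain ⟨m, hm, q₁, q₂, rfl, hq₁⟩ := ih hu
      refine ⟨m, hm, cons h q₁, q₂, rfl, ?_⟩
      simp only [support_cons, List.mem_cons, forall_eq_or_imp]
      exact ⟨fun hr' => absurd hr' hr, hq₁⟩

theorem IsPath.append {u v w : V} {p : G.Walk u v} {q : G.Walk v w} (hp : p.IsPath)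
    (hq : q.IsPath) (h : ∀ x ∈ p.support, x ∈ q.support → x = v) : (p.append q).IsPath := by
  have hq' := hq.support_nodup
  rw [← cons_tail_support q, List.nodup_cons] at hq'
  rw [isPath_def, support_append, List.nodup_append]
  refine ⟨hp.support_nodup, hq'.2, fun x hx y hy hxy => ?_⟩
  subst hxy
  exact hq'.1 (h x hx (List.mem_of_mem_tail hy) ▸ hy)

theorem mem_support_takeUntil_or [DecidableEq V] {u v x y : V} (p : G.Walk u v)
    (hx : x ∈ p.support) (hy : y ∈ p.support) :
    x ∈ (p.takeUntil y hy).support ∨ y ∈ (p.takeUntil x hx).support := by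
  rcases List.prefix_or_prefix_of_prefix (p.support_takeUntil_prefix_support hx)
    (p.support_takeUntil_prefix_support hy) with h | h
  · exact Or.inl (h.subset (end_mem_support _))
  · exact Or.inr (h.subset (end_mem_support _))

end Walk

theorem IsTree.ncard_three_le_degree_add_two_le {W : Type*} [Fintype W] [Nontrivial W]
    {H : SimpleGraph W} [DecidableRel H.Adj] (hH : H.IsTree) :
    {w | 3 ≤ H.degree w}.ncard + 2 ≤ {w | H.degree w = 1}.ncard := by
  classical
  have hsum : ∑ w, (H.degree w : ℤ) = 2 * Fintype.card W - 2 := by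
    have := H.sum_degrees_eq_twice_card_edges
    have := hH.card_edgeFinset
    push_cast [← Nat.cast_sum]
    omega
  have hle : ∀ w, ((if 3 ≤ H.degree w then 1 else 0) - (if H.degree w = 1 then 1 else 0) : ℤ)
      ≤ H.degree w - 2 := fun w => by
    have := hH.connected.preconnected.degree_pos_of_nontrivial w
    split_ifs <;> omega
  -- `∑ (deg w - 2) = -2`; a summand is `≥ 1` at a branching vertex and negative only at a leaf.
  have := Finset.sum_le_sum fun w (_ : w ∈ Finset.univ) => hle w
  simp only [Finset.sum_sub_distrib, Finset.sum_boole, Finset.sum_const, Finset.card_univ, hsum,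
    nsmul_eq_mul] at this
  simp only [Set.ncard_eq_toFinset_card', Set.toFinset_ofPred]
  omega

theorem degree_induce_eq_ncard {S : Set V} {v : V} (hv : v ∈ S)
    [Fintype ((G.induce S).neighborSet ⟨v, hv⟩)] :
    (G.induce S).degree ⟨v, hv⟩ = {u | u ∈ S ∧ G.Adj v u}.ncard := by
  have hset : {u | u ∈ S ∧ G.Adj v u} = Subtype.val '' (G.induce S).neighborSet ⟨v, hv⟩ := by
    ext u
    simp [and_comm]
  rw [hset, Set.ncard_image_of_injective _ Subtype.val_injective, ← card_neighborSet_eq_degree,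
    ← Nat.card_eq_fintype_card, Nat.card_coe_set_eq]

theorem ncard_branch_add_two_le_ncard_leaf [Finite V] {S : Set V} (hS : (G.induce S).IsTree)
    (hS₂ : S.Nontrivial) :
    {v | v ∈ S ∧ 3 ≤ {u | u ∈ S ∧ G.Adj v u}.ncard}.ncard + 2 ≤
      {v | v ∈ S ∧ {u | u ∈ S ∧ G.Adj v u}.ncard = 1}.ncard := by
  classical
  have := Fintype.ofFinite V
  have := Set.nontrivial_coe_sort.mpr hS₂
  have hset : ∀ q : ℕ → Prop, {v | v ∈ S ∧ q {u | u ∈ S ∧ G.Adj v u}.ncard} =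
      Subtype.val '' {w : S | q ((G.induce S).degree w)} := by
    intro q
    ext v
    constructor
    · rintro ⟨hv, hq⟩
      refine ⟨⟨v, hv⟩, ?_, rfl⟩
      rwa [Set.mem_ofPred_eq, degree_induce_eq_ncard]
    · rintro ⟨w, hq, rfl⟩
      rw [Set.mem_ofPred_eq, degree_induce_eq_ncard] at hq
      exact ⟨w.2, hq⟩
  rw [hset (3 ≤ ·), hset (· = 1), Set.ncard_image_of_injective _ Subtype.val_injective,
    Set.ncard_image_of_injective _ Subtype.val_injective]
  exact hS.ncard_three_le_degree_add_two_le

namespace IsTree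

variable (hG : G.IsTree)

noncomputable def path (u v : V) : G.Walk u v :=
  (hG.existsUnique_path u v).exists.choose

theorem isPath_path (u v : V) : (hG.path u v).IsPath :=
  (hG.existsUnique_path u v).exists.choose_spec

variable {hG}

theorem eq_path {u v : V} {q : G.Walk u v} (hq : q.IsPath) : q = hG.path u v :=
  (hG.existsUnique_path u v).unique hq (hG.isPath_path u v)

theorem path_self (u : V) : hG.path u u = .nil :=
  (eq_path .nil).symm

theorem path_reverse (u v : V) : (hG.path u v).reverse = hG.path v u :=
  eq_path (hG.isPath_path u v).reverse

theorem mem_support_path_comm {u v x : V} :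
    x ∈ (hG.path u v).support ↔ x ∈ (hG.path v u).support := by
  rw [← path_reverse, Walk.support_reverse, List.mem_reverse]

theorem path_eq_append {u v m : V} (hm : m ∈ (hG.path u v).support) :
    hG.path u v = (hG.path u m).append (hG.path m v) := by
  obtain ⟨q, r, hq, hr, h⟩ := (hG.isPath_path u v).mem_support_iff_exists_append.mp hm
  rw [h, ← eq_path hq, ← eq_path hr]

theorem support_path_subset {u v m : V} (hm : m ∈ (hG.path u v).support) :
    (hG.path u m).support ⊆ (hG.path u v).support := by
  rw [path_eq_append hm, Walk.support_append]
  exact List.subset_append_left _ _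

theorem mem_support_path_or {u r x y : V} (hx : x ∈ (hG.path u r).support)
    (hy : y ∈ (hG.path u r).support) :
    x ∈ (hG.path u y).support ∨ y ∈ (hG.path u x).support := by
  classical
  rw [← eq_path ((hG.isPath_path u r).takeUntil hx), ← eq_path ((hG.isPath_path u r).takeUntil hy)]
  exact Walk.mem_support_takeUntil_or _ hx hy

theorem exists_median (u v r : V) : ∃ m, m ∈ (hG.path u v).support ∧
    m ∈ (hG.path u r).support ∧ m ∈ (hG.path v r).support := by
  -- `m` is the first vertex of the path from `r` to `u` that lies on the path from `u` to `v`.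
  obtain ⟨m, hm, q₁, q₂, hq, hfirst⟩ :=
    (hG.path r u).exists_append_first_mem (S := {x | x ∈ (hG.path u v).support})
      (hG.path u v).start_mem_support
  have hq₁ : q₁.IsPath := (hq ▸ hG.isPath_path r u).of_append_left
  have hsub : ∀ x ∈ ({u, v} : Set V), (hG.path x m).support ⊆ (hG.path u v).support := by
    rintro x (rfl | rfl)
    · exact support_path_subset hm
    · intro y hy
      exact mem_support_path_comm.mp (support_path_subset (mem_support_path_comm.mp hm) hy)
  have hm_path : ∀ x ∈ ({u, v} : Set V), m ∈ (hG.path x r).support := by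
    intro x hx
    have : ((hG.path x m).append q₁.reverse).IsPath :=
      (hG.isPath_path x m).append hq₁.reverse fun y hy hy' =>
        hfirst y (by simpa using hy') (hsub x hx hy)
    rw [← eq_path this]
    simp
  exact ⟨m, hm, hm_path u (by simp), hm_path v (by simp)⟩

theorem snd_path_ne_snd_path {a b m : V} (hm : m ∈ (hG.path a b).support) (hb : m ≠ b) :
    (hG.path m a).snd ≠ (hG.path m b).snd := by
  have h : ((hG.path m a).reverse.append (hG.path m b)).IsPath := by
    rw [path_reverse, ← path_eq_append hm]
    exact hG.isPath_path a b
  rw [← Walk.penultimate_reverse]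
  exact h.ne_of_mem_support_of_append (Walk.adj_snd (Walk.not_nil_of_ne hb)).ne'
    (Walk.getVert_mem_support _ _) (Walk.getVert_mem_support _ _)

theorem three_le_ncard_of_median [Finite V] {B : Set V}
    (hB : ∀ u ∈ B, ∀ v ∈ B, ∀ x ∈ (hG.path u v).support, x ∈ B) {u v r m : V}
    (hu : u ∈ B) (hv : v ∈ B) (hr : r ∈ B) (hmuv : m ∈ (hG.path u v).support)
    (hmur : m ∈ (hG.path u r).support) (hmvr : m ∈ (hG.path v r).support)
    (hmu : m ≠ u) (hmv : m ≠ v) (hmr : m ≠ r) :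
    3 ≤ {n | n ∈ B ∧ G.Adj m n}.ncard := by
  have hmB : m ∈ B := hB u hu v hv m hmuv
  have hnbr : ∀ x ∈ B, m ≠ x → (hG.path m x).snd ∈ {n | n ∈ B ∧ G.Adj m n} := fun x hx hmx =>
    ⟨hB m hmB x hx _ (Walk.getVert_mem_support _ _), Walk.adj_snd (Walk.not_nil_of_ne hmx)⟩
  calc 3 = ({(hG.path m u).snd, (hG.path m v).snd, (hG.path m r).snd} : Set V).ncard :=
        (Set.ncard_eq_three.mpr ⟨_, _, _, snd_path_ne_snd_path hmuv hmv,
          snd_path_ne_snd_path hmur hmr, snd_path_ne_snd_path hmvr hmr, rfl⟩).symm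
    _ ≤ {n | n ∈ B ∧ G.Adj m n}.ncard := by
      refine Set.ncard_le_ncard ?_ (Set.toFinite _)
      rintro n (rfl | rfl | rfl)
      exacts [hnbr u hu hmu, hnbr v hv hmv, hnbr r hr hmr]

variable (hG) in
/-- Adjacency of `u, v ∈ Y` in the tree obtained from `T` by contracting the paths between
consecutive vertices of `Y`. -/
structure ContractAdj (Y : Set V) (u v : V) : Prop where
  left_mem : u ∈ Y
  right_mem : v ∈ Y
  ne : u ≠ v
  eq_or_eq_of_mem : ∀ x ∈ (hG.path u v).support, x ∈ Y → x = u ∨ x = v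

theorem ContractAdj.symm {Y : Set V} {u v : V} (h : hG.ContractAdj Y u v) :
    hG.ContractAdj Y v u where
  left_mem := h.right_mem
  right_mem := h.left_mem
  ne := h.ne.symm
  eq_or_eq_of_mem x hx hxY :=
    (h.eq_or_eq_of_mem x (mem_support_path_comm.mp hx) hxY).symm

theorem ContractAdj.mem_path_or [Finite V] {B Y : Set V}
    (hB : ∀ u ∈ B, ∀ v ∈ B, ∀ x ∈ (hG.path u v).support, x ∈ B) (hYB : Y ⊆ B)
    (hbranch : ∀ x ∈ B, 3 ≤ {n | n ∈ B ∧ G.Adj x n}.ncard → x ∈ Y) {u v r : V}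
    (h : hG.ContractAdj Y u v) (hr : r ∈ Y) :
    v ∈ (hG.path u r).support ∨ u ∈ (hG.path v r).support := by
  obtain ⟨m, hmuv, hmur, hmvr⟩ := hG.exists_median u v r
  by_cases hmv : m = v
  · exact Or.inl (hmv ▸ hmur)
  by_cases hmu : m = u
  · exact Or.inr (hmu ▸ hmvr)
  have hmY : m ∉ Y := fun hmY => (h.eq_or_eq_of_mem m hmuv hmY).elim hmu hmv
  have hmr : m ≠ r := fun hmr => hmY (hmr ▸ hr)
  exact absurd (hbranch m (hB u (hYB h.left_mem) v (hYB h.right_mem) m hmuv)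
    (three_le_ncard_of_median hB (hYB h.left_mem) (hYB h.right_mem) (hYB hr) hmuv hmur hmvr
      hmu hmv hmr)) hmY

theorem ContractAdj.eq_of_mem_path {Y : Set V} {y o₁ o₂ r : V} (h₁ : hG.ContractAdj Y y o₁)
    (h₂ : hG.ContractAdj Y y o₂) (ho₁ : o₁ ∈ (hG.path y r).support)
    (ho₂ : o₂ ∈ (hG.path y r).support) : o₁ = o₂ := by
  rcases mem_support_path_or ho₁ ho₂ with h | h
  · exact (h₂.eq_or_eq_of_mem o₁ h h₁.right_mem).resolve_left h₁.ne.symm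
  · exact ((h₁.eq_or_eq_of_mem o₂ h h₂.right_mem).resolve_left h₂.ne.symm).symm

theorem ncard_image_le_of_contractAdj [Finite V] {β : Type*} {B Y : Set V}
    (hB : ∀ u ∈ B, ∀ v ∈ B, ∀ x ∈ (hG.path u v).support, x ∈ B) (hYB : Y ⊆ B)
    (hbranch : ∀ x ∈ B, 3 ≤ {n | n ∈ B ∧ G.Adj x n}.ncard → x ∈ Y) {r : V} (hr : r ∈ Y)
    {P : Set (V × V)} (hP : ∀ p ∈ P, hG.ContractAdj Y p.1 p.2) {g : V × V → β}
    (hg : ∀ p ∈ P, g p = g p.swap) : (g '' P).ncard ≤ Y.ncard - 1 := by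
  -- Rooting the contracted tree at `r`, each edge is determined by its endpoint farther from `r`.
  set Q := {q : V × V | hG.ContractAdj Y q.1 q.2 ∧ q.2 ∈ (hG.path q.1 r).support}
  have hPQ : g '' P ⊆ g '' Q := by
    rintro _ ⟨p, hp, rfl⟩
    rcases (hP p hp).mem_path_or hB hYB hbranch hr with h | h
    · exact ⟨p, ⟨hP p hp, h⟩, rfl⟩
    · exact ⟨p.swap, ⟨(hP p hp).symm, h⟩, (hg p hp).symm⟩
  have hQinj : Set.InjOn Prod.fst Q := fun q hq q' hq' hqq' =>
    Prod.ext hqq' (hq.1.eq_of_mem_path (hqq' ▸ hq'.1) hq.2 (hqq' ▸ hq'.2))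
  have hQY : Prod.fst '' Q ⊆ Y \ {r} := by
    rintro _ ⟨q, ⟨hq, hqr⟩, rfl⟩
    refine ⟨hq.left_mem, fun hq₁ => hq.ne ?_⟩
    rw [Set.mem_singleton_iff.mp hq₁, path_self] at hqr
    exact (Set.mem_singleton_iff.mp hq₁).trans (by simpa using hqr : q.2 = r).symm
  calc (g '' P).ncard ≤ (g '' Q).ncard := Set.ncard_le_ncard hPQ (Set.toFinite _)
    _ ≤ Q.ncard := Set.ncard_image_le
    _ = (Prod.fst '' Q).ncard := hQinj.ncard_image.symm
    _ ≤ (Y \ {r}).ncard := Set.ncard_le_ncard hQY (Set.toFinite _)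
    _ = Y.ncard - 1 := Set.ncard_sdiff_singleton_of_mem hr

end IsTree

end General

section Steiner

variable {V : Type} {G : SimpleGraph V}

theorem subset_steinerSet (X : Set V) : X ⊆ SteinerSet G X :=
  fun x hx => ⟨x, hx, x, hx, .nil, .nil, by simp⟩

theorem two_le_ncard_of_mem_steinerSet [Finite V] {X : Set V} {v : V}
    (hv : v ∈ SteinerSet G X) (hvX : v ∉ X) :
    2 ≤ {u | u ∈ SteinerSet G X ∧ G.Adj v u}.ncard := by
  obtain ⟨x₁, hx₁, x₂, hx₂, p, hp, hvp⟩ := hv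
  obtain ⟨q, q', -, -, rfl⟩ := hp.mem_support_iff_exists_append.mp hvp
  have hq : ¬q.Nil := fun h => hvX (h.eq ▸ hx₁)
  have hq' : ¬q'.Nil := fun h => hvX (h.eq ▸ hx₂)
  have hmem : ∀ x ∈ q.support ++ q'.support, x ∈ SteinerSet G X := fun x hx =>
    ⟨x₁, hx₁, x₂, hx₂, _, hp, by simpa [Walk.mem_support_append_iff] using hx⟩
  calc 2 = ({q.penultimate, q'.snd} : Set V).ncard :=
        (Set.ncard_pair (hp.ne_of_mem_support_of_append (Walk.adj_snd hq').ne'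
          (Walk.getVert_mem_support _ _) (Walk.getVert_mem_support _ _))).symm
    _ ≤ _ := by
      refine Set.ncard_le_ncard ?_ (Set.toFinite _)
      rintro n (rfl | rfl)
      · exact ⟨hmem _ (List.mem_append_left _ (Walk.getVert_mem_support _ _)),
          (Walk.adj_penultimate hq).symm⟩
      · exact ⟨hmem _ (List.mem_append_right _ (Walk.getVert_mem_support _ _)), Walk.adj_snd hq'⟩

theorem IsTree.mem_steinerSet_of_mem_path (hG : G.IsTree) {X : Set V} {u v : V}
    (hu : u ∈ SteinerSet G X) (hv : v ∈ SteinerSet G X) :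
    ∀ x ∈ (hG.path u v).support, x ∈ SteinerSet G X := by
  classical
  obtain ⟨x₁, hx₁, x₂, hx₂, p, hp, hup⟩ := hu
  obtain ⟨x₃, hx₃, x₄, hx₄, p', hp', hvp'⟩ := hv
  obtain ⟨q, r, rfl⟩ := p.mem_support_iff_exists_append.mp hup
  obtain ⟨q', r', rfl⟩ := p'.mem_support_iff_exists_append.mp hvp'
  intro x hx
  rw [← IsTree.eq_path (q.reverse.append ((hG.path x₁ x₃).append q')).bypass_isPath] at hx
  have hx := Walk.support_bypass_subset_support _ hx
  simp only [Walk.mem_support_append_iff, Walk.support_reverse, List.mem_reverse] at hx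
  rcases hx with hx | hx | hx
  · exact ⟨x₁, hx₁, x₂, hx₂, _, hp, (Walk.mem_support_append_iff _ _).mpr (Or.inl hx)⟩
  · exact ⟨x₁, hx₁, x₃, hx₃, _, hG.isPath_path x₁ x₃, hx⟩
  · exact ⟨x₃, hx₃, x₄, hx₄, _, hp', (Walk.mem_support_append_iff _ _).mpr (Or.inl hx)⟩

theorem IsTree.isTree_induce_steinerSet (hG : G.IsTree) {X : Set V} (hX : X.Nonempty) :
    (G.induce (SteinerSet G X)).IsTree := by
  obtain ⟨x, hx⟩ := hX
  have : Nonempty (SteinerSet G X) := ⟨⟨x, subset_steinerSet X hx⟩⟩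
  refine ⟨Connected.mk fun a b => ?_, hG.isAcyclic.induce _⟩
  exact ⟨(hG.path a b).induce _ (hG.mem_steinerSet_of_mem_path a.2 b.2)⟩

variable (G) in
def steinerBranchSet (X : Set V) : Set V :=
  {v | v ∈ SteinerSet G X ∧ 3 ≤ {u | u ∈ SteinerSet G X ∧ G.Adj v u}.ncard}

theorem IsTree.ncard_steinerBranchSet_lt [Finite V] (hG : G.IsTree) {X : Set V}
    (hX : X.Nonempty) : (steinerBranchSet G X).ncard < X.ncard := by
  rcases (steinerBranchSet G X).eq_empty_or_nonempty with hBr | ⟨v, hvS, hv⟩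
  · rw [hBr, Set.ncard_empty]
    exact (Set.ncard_pos).mpr hX
  obtain ⟨u, huS, hvu⟩ : {u | u ∈ SteinerSet G X ∧ G.Adj v u}.Nonempty :=
    Set.nonempty_of_ncard_ne_zero (by omega)
  have hleaf : {w | w ∈ SteinerSet G X ∧ {u | u ∈ SteinerSet G X ∧ G.Adj w u}.ncard = 1} ⊆ X :=
    fun w ⟨hwS, hw⟩ => by_contra fun hwX => by
      have := two_le_ncard_of_mem_steinerSet hwS hwX
      omega
  have hcount := ncard_branch_add_two_le_ncard_leaf (hG.isTree_induce_steinerSet hX)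
    ⟨v, hvS, u, huS, hvu.ne⟩
  have := Set.ncard_le_ncard hleaf (Set.toFinite _)
  unfold steinerBranchSet
  omega

theorem mem_internalOf {u v x : V} {p : G.Walk u v}
    (hx : x ∈ p.support) (hxu : x ≠ u) (hxv : x ≠ v) : x ∈ InternalOf G p := by
  rw [← p.cons_tail_support, List.mem_cons] at hx
  exact List.mem_dropLast_of_mem_of_ne_getLast (hx.resolve_left hxu)
    (by grind [Walk.getLast_support])

theorem IsTree.contractAdj_of_internalOf (hG : G.IsTree) {Y : Set V} {u v : V} (hu : u ∈ Y)
    (hv : v ∈ Y) (huv : u ≠ v) (h : ∀ q : G.Walk u v, q.IsPath → ∀ w ∈ InternalOf G q, w ∉ Y) :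
    hG.ContractAdj Y u v where
  left_mem := hu
  right_mem := hv
  ne := huv
  eq_or_eq_of_mem x hx hxY := by
    by_contra hx'
    push Not at hx'
    exact h _ (hG.isPath_path u v) x (mem_internalOf hx hx'.1 hx'.2) hxY

end Steiner

end SimpleGraph

theorem stmt12_general {V : Type} [Fintype V] (G : SimpleGraph V) (hG : G.IsTree)
    (c : V → ℝ)
    (k : ℕ) (hk : ∀ t : ℝ, 0 ≤ t → numHeavy G c t ≤ k)
    (a : ℝ) (ha : 0 < a)
    (hex : {H : Set V | IsHeavyModule G c a H}.Nonempty)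
    (X : Set V)
    (hX1 : ∀ x ∈ X, ∃ H : Set V, IsHeavyModule G c a H ∧ x ∈ H)
    (hX2 : ∀ H : Set V, IsHeavyModule G c a H → ∃! x, x ∈ X ∧ x ∈ H)
    (Y : Set V)
    (hY : Y = X ∪ {v | v ∈ SteinerSet G X ∧
        3 ≤ {u | u ∈ SteinerSet G X ∧ G.Adj v u}.ncard})
    (P : Set (V × V))
    (hP : P = {p | p.1 ∈ Y ∧ p.2 ∈ Y ∧ p.1 ≠ p.2 ∧
      ∀ q : G.Walk p.1 p.2, q.IsPath →
        (InternalOf G q ≠ [] ∧ ∀ w ∈ InternalOf G q, w ∉ Y)})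
    (g : V × V → V)
    (hgsym : ∀ p ∈ P, g p = g p.swap)
    (Z : Set V) (hZ : Z = Y ∪ g '' P) :
    Z.ncard ≤ 4 * k - 3 := by
  obtain ⟨H₀, hH₀⟩ := hex
  obtain ⟨x₀, hx₀, -⟩ := hX2 H₀ hH₀
  have hXk : X.ncard ≤ k :=
    (Set.ncard_le_ncard_of_subset_sUnion (Set.toFinite _)
      (fun x hx => Set.mem_sUnion.mpr (hX1 x hx))
      fun H hH _ hx _ hy => (hX2 H hH).unique hx hy).trans (hk a ha.le)
  have hBr := hG.ncard_steinerBranchSet_lt ⟨x₀, hx₀.1⟩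
  have hYcard : Y.ncard ≤ X.ncard + (steinerBranchSet G X).ncard := by
    rw [hY]; exact Set.ncard_union_le _ _
  have hYB : Y ⊆ SteinerSet G X := by
    rw [hY]; exact Set.union_subset (subset_steinerSet X) fun _ h => h.1
  have hPadj : ∀ p ∈ P, hG.ContractAdj Y p.1 p.2 := fun p hp => by
    rw [hP] at hp
    exact hG.contractAdj_of_internalOf hp.1 hp.2.1 hp.2.2.1 fun q hq => (hp.2.2.2 q hq).2
  have hgP := hG.ncard_image_le_of_contractAdj
    (fun _ hu _ hv => hG.mem_steinerSet_of_mem_path hu hv) hYB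
    (fun x hx h3 => by rw [hY]; exact Or.inr ⟨hx, h3⟩) (by rw [hY]; exact Or.inl hx₀.1) hPadj hgsym
  have hZcard : Z.ncard ≤ Y.ncard + (g '' P).ncard := by
    rw [hZ]; exact Set.ncard_union_le _ _
  omega

/-- With `c` `k`-up-modular, `X` picking one vertex per heavy
module w.r.t. `a`, `Y` adding the branching vertices of `T⟨X⟩`, and `Z` adding
one internal vertex for each pair of `Y`-vertices joined by a nonempty
`Y`-free path, we have `|Z| ≤ 4k − 3`. -/
theorem stmt12 {V : Type} [Fintype V] (G : SimpleGraph V) (hG : G.IsTree)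
    (c : V → ℝ) (hpos : ∀ v, 0 < c v)
    (k : ℕ) (hk : ∀ t : ℝ, 0 ≤ t → numHeavy G c t ≤ k)
    (a : ℝ) (ha : 0 < a)
    (hex : {H : Set V | IsHeavyModule G c a H}.Nonempty)
    (X : Set V)
    (hX1 : ∀ x ∈ X, ∃ H : Set V, IsHeavyModule G c a H ∧ x ∈ H)
    (hX2 : ∀ H : Set V, IsHeavyModule G c a H → ∃! x, x ∈ X ∧ x ∈ H)
    (Y : Set V)
    (hY : Y = X ∪ {v | v ∈ SteinerSet G X ∧
        3 ≤ {u | u ∈ SteinerSet G X ∧ G.Adj v u}.ncard})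
    (P : Set (V × V))
    (hP : P = {p | p.1 ∈ Y ∧ p.2 ∈ Y ∧ p.1 ≠ p.2 ∧
      ∀ q : G.Walk p.1 p.2, q.IsPath →
        (InternalOf G q ≠ [] ∧ ∀ w ∈ InternalOf G q, w ∉ Y)})
    (g : V × V → V)
    (hg : ∀ p ∈ P, ∀ q : G.Walk p.1 p.2, q.IsPath → g p ∈ InternalOf G q)
    (hgsym : ∀ p ∈ P, g p = g p.swap)
    (Z : Set V) (hZ : Z = Y ∪ g '' P) :
    Z.ncard ≤ 4 * k - 3 :=
  stmt12_general G hG c k hk a ha hex X hX1 hX2 Y hY P hP g hgsym Z hZ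
end
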